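/- arXiv:2006.01352 — 9 statements merged into one kernel-verified Lean document; each statement's English description precedes it below -/
import Mathlib

section
/- Let X and Y be real Banach spaces and let L : X → Y be a bounded linear Fredholm operator with dim ker L = d and dim(Y/range L) = e. Then there exist an open neighborhood 𝒰 of L in B(X,Y) and an infinitely Fréchet-differentiable map 𝒮 : 𝒰 → Hom(ker L, Y/range L) such that: (i) 𝒮(L) = 0; (ii) the Fréchet derivative d_L𝒮 : B(X,Y) → Hom(ker L, Y/range L) is surjective; and (iii) for every T ∈ 𝒰 one has (dim ker T = d and dim(Y/range T) = e) if and only if 𝒮(T) = 0. (Thus, near L, the stratum of Fredholm operators with kernel of dimension d and cokernel of dimension e is the zero level set of a smooth map into the de-dimensional space Hom(ker L, Y/range L) which is submersive at L.) -/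
/-!
Choose a continuous projection `p : X → ker L` and a continuous section `j` of `Y → Y ⧸ range L`,
and border `T` to the block operator `[[T, j], [p, 0]] : X × (Y ⧸ range L) → Y × ker L`. It is
invertible at `T = L`, hence on an open neighbourhood of `L`, and there the bottom-right corner
`S T : ker L → Y ⧸ range L` of its inverse depends smoothly on `T`. Solving the block system shows
`ker T ≃ ker (S T)` and `Y ⧸ range T ≃ (Y ⧸ range L) ⧸ range (S T)`, so `T` has kernel of
dimension `d = dim ker L` and cokernel of dimension `e` exactly when `S T = 0`. Along the line
`t ↦ L - t • j ∘ F ∘ p` one computes `S = t • F` exactly, so `d_L S` is onto.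
-/

open ContinuousLinearMap Filter Topology

universe u v

lemma LinearEquiv.rank_eq_natCast_iff {R : Type*} {M : Type u} {N : Type v} [Ring R]
    [AddCommGroup M] [Module R M] [AddCommGroup N] [Module R N] (e : M ≃ₗ[R] N) {n : ℕ} :
    Module.rank R M = n ↔ Module.rank R N = n := by
  rw [← Cardinal.lift_eq_nat_iff.{u, v}, e.lift_rank_eq, Cardinal.lift_eq_nat_iff]

lemma LinearMap.rank_ker_eq_rank_iff {R K V : Type*} [DivisionRing R] [AddCommGroup K]
    [Module R K] [FiniteDimensional R K] [AddCommGroup V] [Module R V] {f : K →ₗ[R] V} :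
    Module.rank R (ker f) = Module.rank R K ↔ f = 0 := by
  refine ⟨fun h => ker_eq_top.mp (Submodule.eq_top_of_finrank_eq ?_), fun h => ?_⟩
  · rw [← Module.finrank_eq_rank, ← Module.finrank_eq_rank] at h
    exact_mod_cast h
  · rw [h, ker_zero, rank_top]

section Bordered

variable {𝕜 X Y V K : Type*} [NontriviallyNormedField 𝕜]
  [NormedAddCommGroup X] [NormedSpace 𝕜 X] [NormedAddCommGroup Y] [NormedSpace 𝕜 Y]
  [NormedAddCommGroup V] [NormedSpace 𝕜 V] [NormedAddCommGroup K] [NormedSpace 𝕜 K]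
  (j : V →L[𝕜] Y) (p : X →L[𝕜] K)

def borderedOp (T : X →L[𝕜] Y) : X × V →L[𝕜] Y × K :=
  (T.coprod j).prod (p ∘L fst 𝕜 X V)

@[simp]
lemma borderedOp_apply (T : X →L[𝕜] Y) (w : X × V) :
    borderedOp j p T w = (T w.1 + j w.2, p w.1) := rfl

noncomputable def cornerOfInverse (T : X →L[𝕜] Y) : K →L[𝕜] V :=
  snd 𝕜 X V ∘L inverse (borderedOp j p T) ∘L inr 𝕜 Y K

lemma borderedOp_eq_add (T : X →L[𝕜] Y) :
    borderedOp j p T = inl 𝕜 Y K ∘L T ∘L fst 𝕜 X V + borderedOp j p 0 := by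
  ext w <;> simp

lemma contDiff_borderedOp {n : WithTop ℕ∞} : ContDiff 𝕜 n (borderedOp (X := X) j p) := by
  rw [show borderedOp j p = _ from funext (borderedOp_eq_add j p)]
  fun_prop

variable {j p} {T : X →L[𝕜] Y}

lemma cornerOfInverse_apply_eq_iff (hT : (borderedOp j p T).IsInvertible) {k : K} {v : V} :
    cornerOfInverse j p T k = v ↔ ∃ x, T x + j v = 0 ∧ p x = k := by
  simp only [cornerOfInverse, coe_comp, Function.comp_apply, inr_apply, coe_snd']
  constructor
  · rintro rfl
    have hw := (hT.inverse_apply_eq (y := ((0 : Y), k))).mp rfl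
    exact ⟨_, by simpa [Prod.ext_iff, eq_comm] using hw⟩
  · rintro ⟨x, hx, rfl⟩
    rw [hT.inverse_apply_eq.mpr (show ((0 : Y), p x) = borderedOp j p T (x, v) by simp [hx])]

lemma isOpen_setOf_isInvertible_borderedOp [CompleteSpace X] [CompleteSpace V] :
    IsOpen {T : X →L[𝕜] Y | (borderedOp j p T).IsInvertible} :=
  ContinuousLinearEquiv.isOpen.preimage (contDiff_borderedOp (n := 0) j p).continuous

lemma contDiffAt_cornerOfInverse [CompleteSpace X] [CompleteSpace V] {n : WithTop ℕ∞}
    (hT : (borderedOp j p T).IsInvertible) : ContDiffAt 𝕜 n (cornerOfInverse j p) T :=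
  contDiffAt_const.clm_comp <|
    (hT.contDiffAt_map_inverse.comp T (contDiff_borderedOp j p).contDiffAt).clm_comp
      contDiffAt_const

noncomputable def kerEquivKerCornerOfInverse (hT : (borderedOp j p T).IsInvertible) :
    LinearMap.ker (T : X →ₗ[𝕜] Y) ≃ₗ[𝕜] LinearMap.ker (cornerOfInverse j p T : K →ₗ[𝕜] V) :=
  LinearEquiv.ofBijective
    ((p : X →ₗ[𝕜] K).restrict fun x (hx : T x = 0) =>
      (cornerOfInverse_apply_eq_iff hT).mpr ⟨x, by simp [hx], rfl⟩)
    ⟨fun a b hab => by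
      have hpab : p a = p b := congrArg Subtype.val hab
      have hB : borderedOp j p T ((a : X), 0) = borderedOp j p T (b, 0) := by
        simp [hpab]
      exact Subtype.ext (congrArg Prod.fst (hT.bijective.injective hB)),
    fun k => by
      obtain ⟨x, hx, hpx⟩ := (cornerOfInverse_apply_eq_iff hT).mp k.2
      exact ⟨⟨x, by simpa using hx⟩, Subtype.ext hpx⟩⟩

lemma range_cornerOfInverse_eq_ker_mkQ_comp (hT : (borderedOp j p T).IsInvertible) :
    LinearMap.range (cornerOfInverse j p T : K →ₗ[𝕜] V) =
      LinearMap.ker ((LinearMap.range (T : X →ₗ[𝕜] Y)).mkQ ∘ₗ (j : V →ₗ[𝕜] Y)) := by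
  ext v
  simp only [LinearMap.mem_range, LinearMap.mem_ker, LinearMap.coe_comp, Function.comp_apply,
    Submodule.mkQ_apply, Submodule.Quotient.mk_eq_zero, coe_coe, cornerOfInverse_apply_eq_iff hT]
  constructor
  · rintro ⟨k, x, hx, -⟩
    exact ⟨-x, by simpa [neg_eq_iff_add_eq_zero, add_comm] using hx⟩
  · rintro ⟨x, hx⟩
    exact ⟨p (-x), -x, by simp [hx], rfl⟩

lemma surjective_mkQ_comp_of_isInvertible_borderedOp (hT : (borderedOp j p T).IsInvertible) :
    Function.Surjective ((LinearMap.range (T : X →ₗ[𝕜] Y)).mkQ ∘ₗ (j : V →ₗ[𝕜] Y)) := by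
  intro y
  obtain ⟨y, rfl⟩ := Submodule.mkQ_surjective _ y
  obtain ⟨⟨x, v⟩, hxv⟩ := hT.bijective.surjective (y, 0)
  rw [borderedOp_apply, Prod.mk.injEq] at hxv
  refine ⟨v, (Submodule.Quotient.eq _).mpr ⟨-x, ?_⟩⟩
  simp [← hxv.1]

noncomputable def quotRangeCornerOfInverseEquiv (hT : (borderedOp j p T).IsInvertible) :
    (V ⧸ LinearMap.range (cornerOfInverse j p T : K →ₗ[𝕜] V)) ≃ₗ[𝕜]
      Y ⧸ LinearMap.range (T : X →ₗ[𝕜] Y) :=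
  (Submodule.quotEquivOfEq _ _ (range_cornerOfInverse_eq_ker_mkQ_comp hT)).trans
    (LinearMap.quotKerEquivOfSurjective _ (surjective_mkQ_comp_of_isInvertible_borderedOp hT))

lemma rank_ker_eq_and_rank_quot_range_eq_iff [FiniteDimensional 𝕜 K] [FiniteDimensional 𝕜 V]
    (hT : (borderedOp j p T).IsInvertible) :
    (Module.rank 𝕜 (LinearMap.ker (T : X →ₗ[𝕜] Y)) = Module.finrank 𝕜 K ∧
      Module.rank 𝕜 (Y ⧸ LinearMap.range (T : X →ₗ[𝕜] Y)) = Module.finrank 𝕜 V) ↔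
      cornerOfInverse j p T = 0 := by
  rw [(kerEquivKerCornerOfInverse hT).rank_eq_natCast_iff,
    ← (quotRangeCornerOfInverseEquiv hT).rank_eq_natCast_iff, Module.finrank_eq_rank,
    LinearMap.rank_ker_eq_rank_iff, ← toLinearMap_zero, coe_inj]
  refine ⟨And.left, fun h => ⟨h, ?_⟩⟩
  rw [h, toLinearMap_zero, LinearMap.range_zero, (Submodule.quotEquivOfEqBot ⊥ rfl).rank_eq,
    Module.finrank_eq_rank]

end Bordered

lemma Submodule.exists_continuous_rightInverse_mkQ {𝕜 Y : Type*} [NontriviallyNormedField 𝕜]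
    [CompleteSpace 𝕜] [NormedAddCommGroup Y] [NormedSpace 𝕜 Y] (R : Submodule 𝕜 Y)
    [IsClosed (R : Set Y)] [FiniteDimensional 𝕜 (Y ⧸ R)] :
    ∃ j : (Y ⧸ R) →L[𝕜] Y, ∀ v, R.mkQ (j v) = v := by
  obtain ⟨j, hj⟩ := R.mkQ.exists_rightInverse_of_surjective R.range_mkQ
  exact ⟨LinearMap.toContinuousLinearMap j, LinearMap.congr_fun hj⟩

section Fredholm

variable {𝕜 X Y : Type*} [NontriviallyNormedField 𝕜]
  [NormedAddCommGroup X] [NormedSpace 𝕜 X] [NormedAddCommGroup Y] [NormedSpace 𝕜 Y]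
  {L : X →L[𝕜] Y} [IsClosed ((LinearMap.range (L : X →ₗ[𝕜] Y) : Submodule 𝕜 Y) : Set Y)]
  {p : X →L[𝕜] LinearMap.ker (L : X →ₗ[𝕜] Y)}
  {j : (Y ⧸ LinearMap.range (L : X →ₗ[𝕜] Y)) →L[𝕜] Y}

lemma bijective_borderedOp_self (hp : ∀ k : LinearMap.ker (L : X →ₗ[𝕜] Y), p k = k)
    (hj : ∀ v, (LinearMap.range (L : X →ₗ[𝕜] Y)).mkQ (j v) = v) :
    Function.Bijective (borderedOp j p L) := by
  have hLk (k : LinearMap.ker (L : X →ₗ[𝕜] Y)) : L k = 0 := k.2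
  have hmk (x : X) : (LinearMap.range (L : X →ₗ[𝕜] Y)).mkQ (L x) = 0 :=
    (Submodule.Quotient.mk_eq_zero _).mpr ⟨x, rfl⟩
  constructor
  · refine (injective_iff_map_eq_zero _).mpr fun ⟨x, v⟩ h => ?_
    simp only [borderedOp_apply, Prod.mk_eq_zero] at h
    have hv : v = 0 := by
      have := congrArg (LinearMap.range (L : X →ₗ[𝕜] Y)).mkQ h.1
      rwa [map_add, hmk, hj, zero_add, map_zero] at this
    have hx : x ∈ LinearMap.ker (L : X →ₗ[𝕜] Y) := by simpa [hv] using h.1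
    have hx0 : x = 0 := congrArg Subtype.val ((hp ⟨x, hx⟩).symm.trans h.2)
    simp [hx0, hv]
  · rintro ⟨y, k⟩
    set v := (LinearMap.range (L : X →ₗ[𝕜] Y)).mkQ y
    obtain ⟨x, hx⟩ : y - j v ∈ LinearMap.range (L : X →ₗ[𝕜] Y) := by
      rw [← Submodule.Quotient.mk_eq_zero, Submodule.Quotient.mk_sub, ← Submodule.mkQ_apply,
        ← Submodule.mkQ_apply, hj, sub_self]
    rw [coe_coe] at hx
    refine ⟨(x - p x + k, v), ?_⟩
    simp [hLk, hp, hx]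

lemma isInvertible_borderedOp_self [CompleteSpace X] [CompleteSpace Y]
    (hp : ∀ k : LinearMap.ker (L : X →ₗ[𝕜] Y), p k = k)
    (hj : ∀ v, (LinearMap.range (L : X →ₗ[𝕜] Y)).mkQ (j v) = v) :
    (borderedOp j p L).IsInvertible :=
  have hB := bijective_borderedOp_self hp hj
  ⟨.ofBijective _ (LinearMap.ker_eq_bot.mpr hB.injective)
    (LinearMap.range_eq_top.mpr hB.surjective), ContinuousLinearEquiv.coe_ofBijective _ _ _⟩

lemma cornerOfInverse_self (hp : ∀ k : LinearMap.ker (L : X →ₗ[𝕜] Y), p k = k)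
    (hB : (borderedOp j p L).IsInvertible) : cornerOfInverse j p L = 0 := by
  ext k
  exact (cornerOfInverse_apply_eq_iff hB).mpr ⟨k, by simp, hp k⟩

lemma cornerOfInverse_add_smul (hp : ∀ k : LinearMap.ker (L : X →ₗ[𝕜] Y), p k = k)
    (F : LinearMap.ker (L : X →ₗ[𝕜] Y) →L[𝕜] Y ⧸ LinearMap.range (L : X →ₗ[𝕜] Y)) {t : 𝕜}
    (ht : (borderedOp j p (L + t • -(j ∘L F ∘L p))).IsInvertible) :
    cornerOfInverse j p (L + t • -(j ∘L F ∘L p)) = t • F := by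
  ext k
  exact (cornerOfInverse_apply_eq_iff ht).mpr ⟨k, by simp [hp], hp k⟩

lemma fderiv_cornerOfInverse_self_apply [CompleteSpace X] [CompleteSpace Y]
    (hp : ∀ k : LinearMap.ker (L : X →ₗ[𝕜] Y), p k = k) (hB : (borderedOp j p L).IsInvertible)
    (F : LinearMap.ker (L : X →ₗ[𝕜] Y) →L[𝕜] Y ⧸ LinearMap.range (L : X →ₗ[𝕜] Y)) :
    fderiv 𝕜 (cornerOfInverse j p) L (-(j ∘L F ∘L p)) = F := by
  set H := -(j ∘L F ∘L p)
  have hline : HasDerivAt (fun t : 𝕜 => L + t • H) H 0 := by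
    simpa using ((hasDerivAt_id (0 : 𝕜)).smul_const H).const_add L
  have hS := ((contDiffAt_cornerOfInverse (n := 1) hB).differentiableAt one_ne_zero).hasFDerivAt
  have hSline := hS.comp_hasDerivAt_of_eq 0 hline (by simp)
  have hinv : ∀ᶠ t in 𝓝 (0 : 𝕜), (borderedOp j p (L + t • H)).IsInvertible :=
    hline.continuousAt.preimage_mem_nhds
      (isOpen_setOf_isInvertible_borderedOp.mem_nhds (by simpa using hB))
  have hSline_eq : cornerOfInverse j p ∘ (fun t : 𝕜 => L + t • H) =ᶠ[𝓝 0] fun t => t • F := by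
    filter_upwards [hinv] with t ht using cornerOfInverse_add_smul hp F ht
  exact (hSline.congr_of_eventuallyEq hSline_eq.symm).unique
    (by simpa using (hasDerivAt_id (0 : 𝕜)).smul_const F)

end Fredholm

/-- **Local structure of the Brill–Noether stratification of Fredholm operators.**
Near a Fredholm operator `L` with `dim ker L = d`, `dim coker L = e`, the stratum of
Fredholm operators with kernel of dimension `d` and cokernel of dimension `e` is the zero
level set of a smooth map `S` into `Hom(ker L, Y ⧸ range L)` with `S L = 0` and `d_L S`
surjective. -/
theorem stmt_2
    {X Y : Type*} [NormedAddCommGroup X] [NormedSpace ℝ X] [CompleteSpace X]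
    [NormedAddCommGroup Y] [NormedSpace ℝ Y] [CompleteSpace Y]
    (L : X →L[ℝ] Y) (d e : ℕ)
    [FiniteDimensional ℝ (LinearMap.ker (L : X →ₗ[ℝ] Y))]
    [IsClosed ((LinearMap.range (L : X →ₗ[ℝ] Y) : Submodule ℝ Y) : Set Y)]
    [FiniteDimensional ℝ (Y ⧸ LinearMap.range (L : X →ₗ[ℝ] Y))]
    (hd : Module.finrank ℝ (LinearMap.ker (L : X →ₗ[ℝ] Y)) = d)
    (he : Module.finrank ℝ (Y ⧸ LinearMap.range (L : X →ₗ[ℝ] Y)) = e) :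
    ∃ (U : Set (X →L[ℝ] Y))
      (S : (X →L[ℝ] Y) → (LinearMap.ker (L : X →ₗ[ℝ] Y) →L[ℝ] Y ⧸ LinearMap.range (L : X →ₗ[ℝ] Y))),
      IsOpen U ∧ L ∈ U ∧ ContDiffOn ℝ (⊤ : ℕ∞) S U ∧
      S L = 0 ∧
      Function.Surjective (fderiv ℝ S L) ∧
      ∀ T ∈ U,
        ((Module.rank ℝ (LinearMap.ker (T : X →ₗ[ℝ] Y)) = (d : Cardinal) ∧
          Module.rank ℝ (Y ⧸ LinearMap.range (T : X →ₗ[ℝ] Y)) = (e : Cardinal)) ↔ S T = 0) := by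
  obtain ⟨p, hp⟩ :=
    Submodule.ClosedComplemented.of_finiteDimensional (LinearMap.ker (L : X →ₗ[ℝ] Y))
  obtain ⟨j, hj⟩ := (LinearMap.range (L : X →ₗ[ℝ] Y)).exists_continuous_rightInverse_mkQ
  have hB := isInvertible_borderedOp_self hp hj
  refine ⟨{T | (borderedOp j p T).IsInvertible}, cornerOfInverse j p,
    isOpen_setOf_isInvertible_borderedOp, hB,
    fun T hT => (contDiffAt_cornerOfInverse hT).contDiffWithinAt, cornerOfInverse_self hp hB,
    fun F => ⟨_, fderiv_cornerOfInverse_self_apply hp hB F⟩, fun T hT => ?_⟩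
  rw [← hd, ← he]
  exact rank_ker_eq_and_rank_quot_range_eq_iff hT
end

section
/- Let X and Y be real Banach spaces and let L : X → Y be a bounded linear Fredholm operator with dim ker L = d and dim(Y/range L) = e. Then for all natural numbers d' and e' with d' ≤ d, e' ≤ e, and d' − e' = d − e (as integers), and for every ε > 0, there exists a bounded linear Fredholm operator T : X → Y with ‖T − L‖ < ε, dim ker T = d', and dim(Y/range T) = e'. -/
/-!
Write `k = d - d' = e - e'`. Perturb `L` by a small multiple of `σ ∘ B ∘ P`, where `P` is a
continuous projection onto `ker L`, `σ` is a linear section of `Y → Y ⧸ range L`, and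
`B : ker L → Y ⧸ range L` has rank `k`. The perturbation takes values in a complement of
`range L` and only sees the `ker L`-component of a vector, so the kernel of the perturbed operator
is `ker B ⊆ ker L`, of dimension `d - k`, and its range is the preimage of `range B` in `Y`, which is
closed and of codimension `e - k`.
-/

open Module Submodule

namespace LinearMap

variable {R M N : Type*} [Ring R] [AddCommGroup M] [Module R M] [AddCommGroup N] [Module R N]
  {L : M →ₗ[R] N} {P : M →ₗ[R] ker L} {σ : N ⧸ range L →ₗ[R] N}

theorem mkQ_add_section_comp_proj (hσ : (range L).mkQ ∘ₗ σ = id) (B : ker L →ₗ[R] N ⧸ range L)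
    (x : M) : (range L).mkQ ((L + σ ∘ₗ B ∘ₗ P) x) = B (P x) := by
  rw [add_apply, map_add, (range L).mkQ_apply,
    (Submodule.Quotient.mk_eq_zero _).2 (mem_range_self L x), zero_add]
  exact LinearMap.congr_fun hσ _

theorem ker_add_section_comp_proj (hP : ∀ x : ker L, P x = x) (hσ : (range L).mkQ ∘ₗ σ = id)
    (B : ker L →ₗ[R] N ⧸ range L) :
    ker (L + σ ∘ₗ B ∘ₗ P) = (ker B).map (ker L).subtype := by
  ext x
  constructor
  · intro hx
    have hBx : B (P x) = 0 := by
      rw [← mkQ_add_section_comp_proj hσ, mem_ker.1 hx, map_zero]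
    have hLx : x ∈ ker L := by simpa [hBx] using mem_ker.1 hx
    refine ⟨⟨x, hLx⟩, ?_, rfl⟩
    rwa [SetLike.mem_coe, mem_ker, ← hP ⟨x, hLx⟩]
  · rintro ⟨v, hv, rfl⟩
    simp [hP v, mem_ker.1 hv]

theorem range_add_section_comp_proj (hP : ∀ x : ker L, P x = x) (hσ : (range L).mkQ ∘ₗ σ = id)
    (B : ker L →ₗ[R] N ⧸ range L) :
    range (L + σ ∘ₗ B ∘ₗ P) = (range B).comap (range L).mkQ := by
  apply le_antisymm
  · rintro _ ⟨x, rfl⟩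
    rw [mem_comap, mkQ_add_section_comp_proj hσ]
    exact mem_range_self B _
  · rintro y ⟨v, hv⟩
    obtain ⟨x, hx⟩ : y - σ (B v) ∈ range L := by
      rw [← Submodule.Quotient.mk_eq_zero, Submodule.Quotient.mk_sub, ← mkQ_apply, ← mkQ_apply,
        ← comp_apply, hσ]
      simp [hv]
    -- `x - P x` has the same image under `L` as `x` and is killed by `P`
    refine ⟨x - P x + v, ?_⟩
    simp [hP, hx]

theorem exists_finrank_range_eq {K V W : Type*} [Field K] [AddCommGroup V] [Module K V]
    [AddCommGroup W] [Module K W] [FiniteDimensional K V] [FiniteDimensional K W] {k : ℕ}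
    (hV : k ≤ finrank K V) (hW : k ≤ finrank K W) :
    ∃ B : V →ₗ[K] W, finrank K (range B) = k := by
  obtain ⟨j, hj⟩ := finrank_le_iff_exists_linearMap.1 ((finrank_fin_fun K).trans_le hV)
  obtain ⟨ι, hι⟩ := finrank_le_iff_exists_linearMap.1 ((finrank_fin_fun K).trans_le hW)
  obtain ⟨π, hπ⟩ := j.exists_leftInverse_of_injective (ker_eq_bot.2 hj)
  have hπ_surj : range π = ⊤ := range_eq_top.2 fun v => ⟨j v, LinearMap.congr_fun hπ v⟩
  refine ⟨ι ∘ₗ π, ?_⟩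
  rw [range_comp, hπ_surj, ← range_eq_map, finrank_range_of_inj hι, finrank_fin_fun]

end LinearMap

def Submodule.quotientComapMkQEquiv {R M : Type*} [Ring R] [AddCommGroup M] [Module R M]
    (p : Submodule R M) (U : Submodule R (M ⧸ p)) : (M ⧸ U.comap p.mkQ) ≃ₗ[R] (M ⧸ p) ⧸ U :=
  (quotientQuotientEquivQuotient p _ (le_comap_mkQ p U)).symm ≪≫ₗ
    quotEquivOfEq _ _ (map_comap_eq_of_surjective p.mkQ_surjective U)

theorem Submodule.isClosed_comap_mkQ {𝕜 E : Type*} [NontriviallyNormedField 𝕜] [CompleteSpace 𝕜]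
    [AddCommGroup E] [TopologicalSpace E] [IsTopologicalAddGroup E] [Module 𝕜 E]
    [ContinuousSMul 𝕜 E] {p : Submodule 𝕜 E} (hp : IsClosed (p : Set E))
    (U : Submodule 𝕜 (E ⧸ p)) [FiniteDimensional 𝕜 U] : IsClosed (U.comap p.mkQ : Set E) := by
  have := hp
  exact U.closed_of_finiteDimensional.preimage continuous_quot_mk

theorem exists_ne_zero_norm_smul_lt {E : Type*} [SeminormedAddCommGroup E] [NormedSpace ℝ E]
    (x : E) {ε : ℝ} (hε : 0 < ε) : ∃ c : ℝ, c ≠ 0 ∧ ‖c • x‖ < ε := by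
  refine ⟨ε / (‖x‖ + 1), by positivity, ?_⟩
  rw [norm_smul, Real.norm_of_nonneg (by positivity), div_mul_eq_mul_div,
    div_lt_iff₀ (by positivity)]
  nlinarith [norm_nonneg x]

theorem stmt_3_general
    {X Y : Type*} [NormedAddCommGroup X] [NormedSpace ℝ X] [CompleteSpace X]
    [NormedAddCommGroup Y] [NormedSpace ℝ Y] [CompleteSpace Y]
    (L : X →L[ℝ] Y) (d e d' e' : ℕ)
    (hker : FiniteDimensional ℝ (LinearMap.ker (L : X →ₗ[ℝ] Y)))
    (hcl : IsClosed ((LinearMap.range (L : X →ₗ[ℝ] Y) : Submodule ℝ Y) : Set Y))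
    (hcoker : FiniteDimensional ℝ (Y ⧸ LinearMap.range (L : X →ₗ[ℝ] Y)))
    (hd : Module.finrank ℝ (LinearMap.ker (L : X →ₗ[ℝ] Y)) = d)
    (he : Module.finrank ℝ (Y ⧸ LinearMap.range (L : X →ₗ[ℝ] Y)) = e)
    (hd' : d' ≤ d)
    (hind : (d' : ℤ) - (e' : ℤ) = (d : ℤ) - (e : ℤ))
    (ε : ℝ) (hε : 0 < ε) :
    ∃ T : X →L[ℝ] Y, ‖T - L‖ < ε ∧
      FiniteDimensional ℝ (LinearMap.ker (T : X →ₗ[ℝ] Y)) ∧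
      IsClosed ((LinearMap.range (T : X →ₗ[ℝ] Y) : Submodule ℝ Y) : Set Y) ∧
      FiniteDimensional ℝ (Y ⧸ LinearMap.range (T : X →ₗ[ℝ] Y)) ∧
      Module.finrank ℝ (LinearMap.ker (T : X →ₗ[ℝ] Y)) = d' ∧
      Module.finrank ℝ (Y ⧸ LinearMap.range (T : X →ₗ[ℝ] Y)) = e' := by
  obtain ⟨P, hP⟩ := ClosedComplemented.of_finiteDimensional (LinearMap.ker (L : X →ₗ[ℝ] Y))
  obtain ⟨σ, hσ⟩ := (LinearMap.range (L : X →ₗ[ℝ] Y)).mkQ.exists_rightInverse_of_surjective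
    (range_mkQ _)
  obtain ⟨B, hB⟩ := LinearMap.exists_finrank_range_eq (V := LinearMap.ker (L : X →ₗ[ℝ] Y))
    (k := d - d') (by rw [hd]; omega) (by rw [he]; omega)
  let S : X →L[ℝ] Y := (σ ∘ₗ B).toContinuousLinearMap ∘L P
  obtain ⟨c, hc, hcS⟩ := exists_ne_zero_norm_smul_lt S hε
  have hT : ((L + c • S : X →L[ℝ] Y) : X →ₗ[ℝ] Y) = L + σ ∘ₗ (c • B) ∘ₗ (P : X →ₗ[ℝ] _) := by
    ext x
    simp [S]
  have hkerT := LinearMap.ker_add_section_comp_proj hP hσ (c • B)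
  have hrangeT := LinearMap.range_add_section_comp_proj hP hσ (c • B)
  rw [← hT, LinearMap.ker_smul _ _ hc] at hkerT
  rw [← hT, LinearMap.range_smul _ _ hc] at hrangeT
  refine ⟨L + c • S, by simpa using hcS, by rw [hkerT]; infer_instance, ?_, ?_, ?_, ?_⟩
  · rw [hrangeT]
    exact isClosed_comap_mkQ hcl _
  · rw [hrangeT]
    exact (quotientComapMkQEquiv _ _).symm.finiteDimensional
  · rw [hkerT, finrank_map_subtype_eq]
    have := LinearMap.finrank_range_add_finrank_ker B
    omega
  · rw [hrangeT, (quotientComapMkQEquiv _ _).finrank_eq]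
    have := Submodule.finrank_quotient_add_finrank (LinearMap.range B)
    omega

/-- Near a Fredholm operator `L` with `dim ker L = d` and `dim coker L = e`, for all
`d' ≤ d`, `e' ≤ e` with `d' − e' = d − e` and every `ε > 0` there is a Fredholm operator
`T` with `‖T − L‖ < ε`, `dim ker T = d'` and `dim coker T = e'`. -/
theorem stmt_3
    {X Y : Type*} [NormedAddCommGroup X] [NormedSpace ℝ X] [CompleteSpace X]
    [NormedAddCommGroup Y] [NormedSpace ℝ Y] [CompleteSpace Y]
    (L : X →L[ℝ] Y) (d e d' e' : ℕ)
    (hker : FiniteDimensional ℝ (LinearMap.ker (L : X →ₗ[ℝ] Y)))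
    (hcl : IsClosed ((LinearMap.range (L : X →ₗ[ℝ] Y) : Submodule ℝ Y) : Set Y))
    (hcoker : FiniteDimensional ℝ (Y ⧸ LinearMap.range (L : X →ₗ[ℝ] Y)))
    (hd : Module.finrank ℝ (LinearMap.ker (L : X →ₗ[ℝ] Y)) = d)
    (he : Module.finrank ℝ (Y ⧸ LinearMap.range (L : X →ₗ[ℝ] Y)) = e)
    (hd' : d' ≤ d) (he' : e' ≤ e)
    (hind : (d' : ℤ) - (e' : ℤ) = (d : ℤ) - (e : ℤ))
    (ε : ℝ) (hε : 0 < ε) :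
    ∃ T : X →L[ℝ] Y, ‖T - L‖ < ε ∧
      FiniteDimensional ℝ (LinearMap.ker (T : X →ₗ[ℝ] Y)) ∧
      IsClosed ((LinearMap.range (T : X →ₗ[ℝ] Y) : Submodule ℝ Y) : Set Y) ∧
      FiniteDimensional ℝ (Y ⧸ LinearMap.range (T : X →ₗ[ℝ] Y)) ∧
      Module.finrank ℝ (LinearMap.ker (T : X →ₗ[ℝ] Y)) = d' ∧
      Module.finrank ℝ (Y ⧸ LinearMap.range (T : X →ₗ[ℝ] Y)) = e' :=
  stmt_3_general L d e d' e' hker hcl hcoker hd he hd' hind ε hε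
end

section
/- Let K be a field, let U and C be finite-dimensional K-vector spaces with dim U = d and dim C = e, let W be a K-vector space, let ρ ∈ ℕ, and let Λ : W → Hom(U, C) be a linear map. Suppose that for every nonzero linear map B : C → U of rank at most ρ there exists w ∈ W with tr(B ∘ Λ(w)) ≠ 0. Then the rank of Λ satisfies dim(range Λ) ≥ min{ρ, d, e} · max{d, e}. -/
/-!
A subspace `S ⊆ Hom(C, U)` all of whose elements have rank at most `ρ` meets the annihilator
of `range Λ` under the trace pairing only in `0`, so `S` embeds into the dual of `range Λ`
and `dim S ≤ rk Λ`. Such subspaces of dimension `r * e` and `r * d` are the maps with image in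
a fixed `r`-dimensional subspace of `U` (`r ≤ d`), and the maps factoring through a fixed
`r`-dimensional quotient of `C` (`r ≤ e`). Taking `r = min ρ (min d e)` and the better of the
two gives `min ρ (min d e) * max d e`.
-/

open LinearMap Module

section TraceDuality

variable {K : Type*} [Field K]

lemma Submodule.exists_finrank_eq {V : Type*} [AddCommGroup V] [Module K V]
    [FiniteDimensional K V] {r : ℕ} (h : r ≤ finrank K V) :
    ∃ S : Submodule K V, finrank K S = r := by
  let b := finBasis K V
  refine ⟨Submodule.span K (Set.range (b ∘ Fin.castLE h)), ?_⟩
  rw [finrank_span_eq_card (b.linearIndependent.comp _ (Fin.castLE_injective h))]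
  simp

noncomputable def tracePairing (K U C : Type*) [Field K] [AddCommGroup U] [Module K U]
    [AddCommGroup C] [Module K C] : (C →ₗ[K] U) →ₗ[K] (U →ₗ[K] C) →ₗ[K] K :=
  (llcomp K U C U).compr₂ (trace K U)

variable {U C W M : Type*} [AddCommGroup U] [Module K U] [AddCommGroup C] [Module K C]
  [AddCommGroup W] [Module K W] [AddCommGroup M] [Module K M]
  [FiniteDimensional K U] [FiniteDimensional K C]
  {ρ : ℕ} {Λ : W →ₗ[K] (U →ₗ[K] C)}

lemma finrank_le_finrank_range_of_injective_of_finrank_range_le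
    (hB : ∀ B : C →ₗ[K] U, B ≠ 0 → finrank K (range B) ≤ ρ →
      ∃ w : W, trace K U (B ∘ₗ Λ w) ≠ 0)
    {Ψ : M →ₗ[K] (C →ₗ[K] U)} (hΨ : Function.Injective Ψ)
    (hrank : ∀ m, finrank K (range (Ψ m)) ≤ ρ) :
    finrank K M ≤ finrank K (range Λ) := by
  let T : M →ₗ[K] Dual K (range Λ) := (tracePairing K U C).compl₁₂ Ψ (range Λ).subtype
  have hT : Function.Injective T := by
    rw [← ker_eq_bot, ker_eq_bot']
    intro m hm
    by_contra hm0
    obtain ⟨w, hw⟩ := hB (Ψ m) (hΨ.ne_iff' (map_zero Ψ) |>.mpr hm0) (hrank m)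
    exact hw (congr($hm ⟨Λ w, mem_range_self Λ w⟩))
  calc finrank K M ≤ finrank K (Dual K (range Λ)) := finrank_le_finrank_of_injective hT
    _ = finrank K (range Λ) := Subspace.dual_finrank_eq

lemma mul_finrank_le_finrank_range_of_le_finrank_domain
    (hB : ∀ B : C →ₗ[K] U, B ≠ 0 → finrank K (range B) ≤ ρ →
      ∃ w : W, trace K U (B ∘ₗ Λ w) ≠ 0)
    {r : ℕ} (hrρ : r ≤ ρ) (hrU : r ≤ finrank K U) :
    r * finrank K C ≤ finrank K (range Λ) := by
  obtain ⟨U', hU'⟩ := Submodule.exists_finrank_eq hrU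
  have hΨ : Function.Injective (compRight K (M := C) U'.subtype) := fun _ _ h ↦
    (cancel_left U'.injective_subtype).mp h
  have hrank (B : C →ₗ[K] U') : finrank K (range (U'.subtype ∘ₗ B)) ≤ ρ :=
    calc finrank K (range (U'.subtype ∘ₗ B)) ≤ finrank K U' :=
          Submodule.finrank_mono ((range_comp_le_range _ _).trans U'.range_subtype.le)
      _ ≤ ρ := hU' ▸ hrρ
  simpa [finrank_linearMap, hU', mul_comm] using
    finrank_le_finrank_range_of_injective_of_finrank_range_le hB hΨ hrank

lemma mul_finrank_le_finrank_range_of_le_finrank_codomain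
    (hB : ∀ B : C →ₗ[K] U, B ≠ 0 → finrank K (range B) ≤ ρ →
      ∃ w : W, trace K U (B ∘ₗ Λ w) ≠ 0)
    {r : ℕ} (hrρ : r ≤ ρ) (hrC : r ≤ finrank K C) :
    r * finrank K U ≤ finrank K (range Λ) := by
  obtain ⟨C', hC'⟩ := Submodule.exists_finrank_eq (Nat.sub_le (finrank K C) r)
  have hQ : finrank K (C ⧸ C') = r := by
    have := C'.finrank_quotient_add_finrank
    omega
  have hΨ : Function.Injective (lcomp K U C'.mkQ) := fun _ _ h ↦
    (cancel_right C'.mkQ_surjective).mp h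
  have hrank (B : C ⧸ C' →ₗ[K] U) : finrank K (range (B ∘ₗ C'.mkQ)) ≤ ρ :=
    calc finrank K (range (B ∘ₗ C'.mkQ)) ≤ finrank K (range B) :=
          Submodule.finrank_mono (range_comp_le_range _ _)
      _ ≤ finrank K (C ⧸ C') := finrank_range_le B
      _ ≤ ρ := hQ ▸ hrρ
  simpa [finrank_linearMap, hQ] using
    finrank_le_finrank_range_of_injective_of_finrank_range_le hB hΨ hrank

end TraceDuality

/-- If `Λ : W → Hom(U, C)` is a linear map such that no nonzero `B : C → U` of rank at
most `ρ` annihilates the image of `Λ` under the trace pairing, then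
`rk Λ ≥ min {ρ, d, e} * max {d, e}` where `d = dim U` and `e = dim C`. -/
theorem stmt_5 {K : Type*} [Field K]
    {U C W : Type*} [AddCommGroup U] [Module K U] [AddCommGroup C] [Module K C]
    [AddCommGroup W] [Module K W]
    [FiniteDimensional K U] [FiniteDimensional K C]
    (d e ρ : ℕ) (hd : Module.finrank K U = d) (he : Module.finrank K C = e)
    (Λ : W →ₗ[K] (U →ₗ[K] C))
    (hB : ∀ B : C →ₗ[K] U, B ≠ 0 → Module.finrank K (LinearMap.range B) ≤ ρ →
      ∃ w : W, LinearMap.trace K U (B ∘ₗ Λ w) ≠ 0) :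
    min ρ (min d e) * max d e ≤ Module.finrank K (LinearMap.range Λ) := by
  subst hd he
  rcases le_total (finrank K U) (finrank K C) with hUC | hCU
  · rw [max_eq_right hUC]
    exact mul_finrank_le_finrank_range_of_le_finrank_domain hB (min_le_left _ _)
      ((min_le_right _ _).trans (min_le_left _ _))
  · rw [max_eq_left hCU]
    exact mul_finrank_le_finrank_range_of_le_finrank_codomain hB (min_le_left _ _)
      ((min_le_right _ _).trans (min_le_right _ _))
end

section
/- Let K be a field, let V and W be finite-dimensional K-vector spaces, let k ∈ ℤ, and let (F_j)_{j∈ℤ} and (G_j)_{j∈ℤ} be decreasing filtrations of V and W by subspaces which are exhaustive (⋃_j F_j = V and ⋃_j G_j = W) and separated (⋂_j F_j = 0 and ⋂_j G_j = 0). Let f : V → W be a linear map with f(F_j) ⊆ G_{j+k} for every j ∈ ℤ, and for each j let gr_j f : F_j/F_{j+1} → G_{j+k}/G_{j+k+1} denote the induced linear map on the associated graded pieces. Then dim(range f) ≥ Σ_{j∈ℤ} dim(range gr_j f), where the sum has only finitely many nonzero terms. -/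
/-!
Let `R` be the range of `f` and `e i = dim (R ⊓ G i)`. The image of `gr_j f` lies in the image of
`R ⊓ G (j+k)` in `G (j+k) ⧸ G (j+k+1)`, whose dimension is `e (j+k) - e (j+k+1)`. Summing over `j`
telescopes, so every finite partial sum of the ranks of `gr_j f` is at most `dim R`; in particular
only finitely many of them are nonzero.
-/

/-- The map induced on the associated graded pieces by a filtered linear map `f` of
degree `k`: `gr_j f : F j ⧸ F (j+1) →ₗ G (j+k) ⧸ G (j+k+1)`. -/
noncomputable def grMap {K V W : Type*} [Field K] [AddCommGroup V] [Module K V]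
    [AddCommGroup W] [Module K W]
    (F : ℤ → Submodule K V) (G : ℤ → Submodule K W) (k : ℤ)
    (f : V →ₗ[K] W) (hf : ∀ j : ℤ, ∀ x ∈ F j, f x ∈ G (j + k)) (j : ℤ) :
    (↥(F j) ⧸ (Submodule.comap (F j).subtype (F (j + 1)))) →ₗ[K]
      (↥(G (j + k)) ⧸ (Submodule.comap (G (j + k)).subtype (G (j + k + 1)))) :=
  Submodule.mapQ _ _ (f.restrict (hf j)) (by
    intro x hx
    have hx' : (x : V) ∈ F (j + 1) := hx
    have hfx : f (x : V) ∈ G (j + 1 + k) := hf (j + 1) _ hx'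
    have : f (x : V) ∈ G (j + k + 1) := by
      rwa [show j + 1 + k = j + k + 1 by ring] at hfx
    simpa [Submodule.mem_comap, LinearMap.restrict_apply] using this)

section Telescoping

variable {r e : ℤ → ℕ}

theorem Finset.sum_le_of_forall_add_succ_le (h : ∀ j, r j + e (j + 1) ≤ e j) (S : Finset ℤ)
    {i : ℤ} (hi : ∀ j ∈ S, i ≤ j) : ∑ j ∈ S, r j ≤ e i := by
  classical
  have he : Antitone e := antitone_int_of_succ_le fun j => le_of_add_le_right (h j)
  induction S using Finset.induction_on_min generalizing i with
  | empty => simp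
  | insert a S hlt ih =>
    rw [Finset.sum_insert fun haS => (hlt a haS).false]
    calc r a + ∑ j ∈ S, r j ≤ r a + e (a + 1) :=
          Nat.add_le_add_left (ih hlt) _
      _ ≤ e a := h a
      _ ≤ e i := he (hi a (Finset.mem_insert_self a S))

theorem finite_support_and_finsum_le_of_forall_add_succ_le {N : ℕ}
    (h : ∀ j, r j + e (j + 1) ≤ e j) (hN : ∀ j, e j ≤ N) :
    (Function.support r).Finite ∧ ∑ᶠ j, r j ≤ N := by
  have hsum (S : Finset ℤ) : ∑ j ∈ S, r j ≤ N :=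
    let ⟨i, hi⟩ := S.bddBelow
    (Finset.sum_le_of_forall_add_succ_le h S fun _ hj => hi hj).trans (hN i)
  have hfin : (Function.support r).Finite := by
    by_contra hinf
    obtain ⟨S, hS, hcard⟩ := Set.Infinite.exists_subset_card_eq hinf (N + 1)
    have hcard_le : S.card • 1 ≤ ∑ j ∈ S, r j :=
      S.card_nsmul_le_sum r 1 fun j hj => Nat.one_le_iff_ne_zero.mpr (hS hj)
    rw [smul_eq_mul, mul_one, hcard] at hcard_le
    have := hsum S
    omega
  refine ⟨hfin, ?_⟩
  rw [finsum_eq_finsetSum_of_support_subset r hfin.coe_toFinset.ge]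
  exact hsum _

end Telescoping

section GradedPieces

open Module Submodule LinearMap

variable {K V W : Type*} [Field K] [AddCommGroup V] [Module K V] [AddCommGroup W] [Module K W]

theorem Submodule.finrank_range_mkQ_comp_inclusion_add_le [FiniteDimensional K W]
    {P Q : Submodule K W} (hPQ : P ≤ Q) (T : Submodule K W) :
    finrank K (range ((comap Q.subtype P).mkQ ∘ₗ inclusion (inf_le_right : T ⊓ Q ≤ Q))) +
      finrank K ↥(T ⊓ P) ≤ finrank K ↥(T ⊓ Q) := by
  set g := (comap Q.subtype P).mkQ ∘ₗ inclusion (inf_le_right : T ⊓ Q ≤ Q)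
  have hle : T ⊓ P ≤ T ⊓ Q := inf_le_inf_left T hPQ
  have hker : range (inclusion hle) ≤ ker g := by
    rintro _ ⟨x, rfl⟩
    simpa [g] using x.2.2
  calc finrank K (range g) + finrank K ↥(T ⊓ P)
      = finrank K (range g) + finrank K (range (inclusion hle)) := by
        rw [finrank_range_of_inj (inclusion_injective hle)]
    _ ≤ finrank K (range g) + finrank K (ker g) := by grw [finrank_mono hker]
    _ = finrank K ↥(T ⊓ Q) := finrank_range_add_finrank_ker g

variable (F : ℤ → Submodule K V) (G : ℤ → Submodule K W) (k : ℤ) (f : V →ₗ[K] W)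
  (hf : ∀ j : ℤ, ∀ x ∈ F j, f x ∈ G (j + k)) (j : ℤ)

theorem range_grMap_le :
    range (grMap F G k f hf j) ≤
      range ((comap (G (j + k)).subtype (G (j + k + 1))).mkQ ∘ₗ
        inclusion (inf_le_right : range f ⊓ G (j + k) ≤ G (j + k))) := by
  rintro _ ⟨x, rfl⟩
  obtain ⟨x, rfl⟩ := Submodule.Quotient.mk_surjective _ x
  exact ⟨⟨f x, ⟨x, rfl⟩, hf j x x.2⟩, rfl⟩

theorem finrank_range_grMap_add_le [FiniteDimensional K W] (hG : G (j + k + 1) ≤ G (j + k)) :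
    finrank K (range (grMap F G k f hf j)) + finrank K ↥(range f ⊓ G (j + k + 1)) ≤
      finrank K ↥(range f ⊓ G (j + k)) := by
  grw [finrank_mono (range_grMap_le F G k f hf j)]
  exact finrank_range_mkQ_comp_inclusion_add_le hG (range f)

end GradedPieces

theorem stmt_9_general {K V W : Type*} [Field K] [AddCommGroup V] [Module K V]
    [AddCommGroup W] [Module K W] [FiniteDimensional K W]
    (F : ℤ → Submodule K V) (G : ℤ → Submodule K W)
    (hGmono : ∀ j : ℤ, G (j + 1) ≤ G j)
    (k : ℤ) (f : V →ₗ[K] W) (hf : ∀ j : ℤ, ∀ x ∈ F j, f x ∈ G (j + k)) :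
    {j : ℤ | Module.finrank K ↥(LinearMap.range (grMap F G k f hf j)) ≠ 0}.Finite ∧
    ∑ᶠ j : ℤ, Module.finrank K ↥(LinearMap.range (grMap F G k f hf j)) ≤
      Module.finrank K ↥(LinearMap.range f) := by
  refine finite_support_and_finsum_le_of_forall_add_succ_le
    (e := fun j => Module.finrank K ↥(LinearMap.range f ⊓ G (j + k))) (fun j => ?_)
    fun j => Submodule.finrank_mono inf_le_left
  rw [add_right_comm j 1 k]
  exact finrank_range_grMap_add_le F G k f hf j (hGmono (j + k))

/-- For a filtered map `f` of degree `k` between finite-dimensional spaces with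
exhaustive, separated decreasing filtrations, the rank of `f` is at least the sum of the
ranks of the graded maps `gr_j f` (only finitely many of which are nonzero). -/
theorem stmt_9 {K V W : Type*} [Field K] [AddCommGroup V] [Module K V]
    [AddCommGroup W] [Module K W] [FiniteDimensional K V] [FiniteDimensional K W]
    (F : ℤ → Submodule K V) (G : ℤ → Submodule K W)
    (hFmono : ∀ j : ℤ, F (j + 1) ≤ F j) (hGmono : ∀ j : ℤ, G (j + 1) ≤ G j)
    (hFexh : ∀ v : V, ∃ j : ℤ, v ∈ F j) (hGexh : ∀ w : W, ∃ j : ℤ, w ∈ G j)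
    (hFsep : (⨅ j : ℤ, F j) = ⊥) (hGsep : (⨅ j : ℤ, G j) = ⊥)
    (k : ℤ) (f : V →ₗ[K] W) (hf : ∀ j : ℤ, ∀ x ∈ F j, f x ∈ G (j + k)) :
    {j : ℤ | Module.finrank K ↥(LinearMap.range (grMap F G k f hf j)) ≠ 0}.Finite ∧
    ∑ᶠ j : ℤ, Module.finrank K ↥(LinearMap.range (grMap F G k f hf j)) ≤
      Module.finrank K ↥(LinearMap.range f) :=
  stmt_9_general F G hGmono k f hf
end

section
/- Let n ∈ ℕ and let χ : ℝⁿ → ℝ be a C^∞ function whose support is contained in the closed unit ball. Then there exists a sequence (ε_ℓ)_{ℓ∈ℕ} with ε_ℓ ∈ (0,1) for every ℓ such that for every r ∈ (0,1] and every polynomial function p : ℝⁿ → ℝ the series Σ_{ℓ=0}^∞ ε_ℓ · sup_{x∈ℝⁿ} ‖D^ℓ(χ_r · p)(x)‖ converges, where χ_r(x) := χ(x/r) and D^ℓ g denotes the ℓ-th iterated Fréchet derivative of g, measured in the operator norm on ℓ-multilinear maps. -/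
/-!
Since `χ` has compact support, `‖D^j χ‖ ≤ C j` for constants `C j`, and the rescaled cutoff
`χ_r = χ(r⁻¹ ·)` satisfies `‖D^j χ_r‖ ≤ r⁻ʲ C j`. A polynomial has only finitely many nonzero
derivatives, so they are bounded, uniformly in the order, on the compact support of `χ_r`. The
Leibniz rule then gives `‖D^ℓ (χ_r p)‖ ≤ N_{r,p} r^{-ℓ} M ℓ` with `M ℓ = ∑ᵢ (ℓ choose i) C i`
independent of `r` and `p`. The weights `ε ℓ = ((2 + M ℓ) ℓ!)⁻¹` absorb `M ℓ`, and the factorial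
beats every geometric growth `r^{-ℓ}`.
-/

open Set Finset
open scoped Nat

section Derivatives

variable {𝕜 E F A : Type*} [NontriviallyNormedField 𝕜] [NormedAddCommGroup E] [NormedSpace 𝕜 E]
  [NormedAddCommGroup F] [NormedSpace 𝕜 F] [NormedRing A] [NormedAlgebra 𝕜 A]

theorem ContinuousLinearMap.iteratedFDeriv_eq_zero (g : E →L[𝕜] F) {k : ℕ} (hk : 1 < k) :
    iteratedFDeriv 𝕜 k g = 0 := by
  obtain ⟨m, rfl⟩ : ∃ m, k = m + 2 := ⟨k - 2, by omega⟩
  funext x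
  have hg' : fderiv 𝕜 g = fun _ => g := funext fun _ => g.fderiv
  rw [Pi.zero_apply, ← norm_eq_zero, ← norm_iteratedFDeriv_fderiv (n := m + 1), hg',
    iteratedFDeriv_const_of_ne (by omega)]
  simp

theorem iteratedFDeriv_mul_eq_zero_of_lt {f g : E → A} {k : ℕ} (hf : ContDiff 𝕜 k f)
    (hg : ContDiff 𝕜 k g) {a b : ℕ} (hfa : ∀ i, a < i → iteratedFDeriv 𝕜 i f = 0)
    (hgb : ∀ j, b < j → iteratedFDeriv 𝕜 j g = 0) (hk : a + b < k) :
    iteratedFDeriv 𝕜 k (fun x => f x * g x) = 0 := by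
  funext x
  refine norm_le_zero_iff.1 ((norm_iteratedFDeriv_mul_le hf hg x le_rfl).trans_eq ?_)
  refine sum_eq_zero fun i hi => ?_
  rcases le_or_gt i a with hia | hia
  · simp [hgb (k - i) (by omega)]
  · simp [hfa i hia]

theorem norm_iteratedFDeriv_comp_smul_le {f : E → F} {k : ℕ} (hf : ContDiff 𝕜 k f) (c : 𝕜)
    (x : E) :
    ‖iteratedFDeriv 𝕜 k (fun y => f (c • y)) x‖ ≤ ‖c‖ ^ k * ‖iteratedFDeriv 𝕜 k f (c • x)‖ := by
  set L : E →L[𝕜] E := c • ContinuousLinearMap.id 𝕜 E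
  have hL : ‖L‖ ≤ ‖c‖ := (ContinuousLinearMap.opNorm_smul_le c _).trans
    (mul_le_of_le_one_right (norm_nonneg c) ContinuousLinearMap.norm_id_le)
  calc ‖iteratedFDeriv 𝕜 k (f ∘ L) x‖
      = ‖(iteratedFDeriv 𝕜 k f (L x)).compContinuousLinearMap fun _ => L‖ := by
        rw [L.iteratedFDeriv_comp_right hf x le_rfl]
    _ ≤ ‖iteratedFDeriv 𝕜 k f (L x)‖ * ∏ _ : Fin k, ‖L‖ :=
        ContinuousMultilinearMap.norm_compContinuousLinearMap_le _ _
    _ ≤ ‖c‖ ^ k * ‖iteratedFDeriv 𝕜 k f (c • x)‖ := by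
        rw [prod_const, Finset.card_univ, Fintype.card_fin, mul_comm]
        gcongr
        rfl

theorem norm_iteratedFDeriv_mul_le_of_tsupport {f g : E → A} {k : ℕ} (hf : ContDiff 𝕜 k f)
    (hg : ContDiff 𝕜 k g) {a : ℕ → ℝ} {B : ℝ}
    (ha : ∀ i ≤ k, ∀ x, ‖iteratedFDeriv 𝕜 i f x‖ ≤ a i)
    (hB : ∀ j ≤ k, ∀ x ∈ tsupport f, ‖iteratedFDeriv 𝕜 j g x‖ ≤ B) (hB0 : 0 ≤ B) (x : E) :
    ‖iteratedFDeriv 𝕜 k (fun y => f y * g y) x‖ ≤ B * ∑ i ∈ range (k + 1), k.choose i * a i := by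
  have ha0 : ∀ i ∈ range (k + 1), 0 ≤ (k.choose i : ℝ) * a i := fun i hi =>
    mul_nonneg (Nat.cast_nonneg _) ((norm_nonneg _).trans (ha i (mem_range_succ_iff.1 hi) x))
  by_cases hx : x ∈ tsupport f
  · calc ‖iteratedFDeriv 𝕜 k (fun y => f y * g y) x‖
        ≤ ∑ i ∈ range (k + 1), (k.choose i : ℝ) * ‖iteratedFDeriv 𝕜 i f x‖ *
            ‖iteratedFDeriv 𝕜 (k - i) g x‖ := norm_iteratedFDeriv_mul_le hf hg x le_rfl
      _ ≤ ∑ i ∈ range (k + 1), (k.choose i : ℝ) * a i * B := by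
        refine sum_le_sum fun i hi => ?_
        gcongr
        · exact ha0 i hi
        · exact ha i (mem_range_succ_iff.1 hi) x
        · exact hB _ (Nat.sub_le k i) x hx
      _ = B * ∑ i ∈ range (k + 1), k.choose i * a i := by
        rw [mul_sum]
        exact sum_congr rfl fun i _ => by ring
  · have hfg : x ∉ tsupport (iteratedFDeriv 𝕜 k fun y => f y * g y) := fun h =>
      hx (tsupport_mul_subset_left (tsupport_iteratedFDeriv_subset k h))
    rw [image_eq_zero_of_notMem_tsupport hfg, norm_zero]
    exact mul_nonneg hB0 (sum_nonneg ha0)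

end Derivatives

namespace MvPolynomial

variable {𝕜 σ : Type*} [NontriviallyNormedField 𝕜] [Fintype σ]

theorem contDiff_eval (p : MvPolynomial σ 𝕜) {n : WithTop ℕ∞} :
    ContDiff 𝕜 n fun x : σ → 𝕜 => eval x p :=
  (AnalyticOnNhd.eval_continuousLinearMap (ContinuousLinearMap.id 𝕜 (σ → 𝕜)) p).contDiff

theorem exists_iteratedFDeriv_eval_eq_zero (p : MvPolynomial σ 𝕜) :
    ∃ d, ∀ k, d < k → iteratedFDeriv 𝕜 k (fun x : σ → 𝕜 => eval x p) = 0 := by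
  induction p using MvPolynomial.induction_on with
  | C a =>
    exact ⟨0, fun k hk => by simpa using iteratedFDeriv_const_of_ne (𝕜 := 𝕜) (E := σ → 𝕜) hk.ne' a⟩
  | add p q hp hq =>
    obtain ⟨d₁, h₁⟩ := hp
    obtain ⟨d₂, h₂⟩ := hq
    refine ⟨max d₁ d₂, fun k hk => ?_⟩
    simp only [map_add]
    rw [fun_iteratedFDeriv_add p.contDiff_eval q.contDiff_eval, h₁ k (by omega), h₂ k (by omega)]
    simp only [Pi.zero_apply, add_zero]
    rfl
  | mul_X p i hp =>
    obtain ⟨d, hd⟩ := hp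
    refine ⟨d + 1, fun k hk => ?_⟩
    simp only [eval_mul, eval_X]
    let xᵢ : (σ → 𝕜) →L[𝕜] 𝕜 := ContinuousLinearMap.proj i
    exact iteratedFDeriv_mul_eq_zero_of_lt p.contDiff_eval xᵢ.contDiff hd
      (fun j hj => xᵢ.iteratedFDeriv_eq_zero hj) hk

theorem exists_bound_iteratedFDeriv_eval (p : MvPolynomial σ 𝕜) {K : Set (σ → 𝕜)}
    (hK : IsCompact K) :
    ∃ N, 0 ≤ N ∧ ∀ k, ∀ x ∈ K, ‖iteratedFDeriv 𝕜 k (fun x : σ → 𝕜 => eval x p) x‖ ≤ N := by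
  obtain ⟨d, hd⟩ := p.exists_iteratedFDeriv_eval_eq_zero
  choose C hC using fun k : ℕ => hK.exists_bound_of_continuousOn
    (p.contDiff_eval.continuous_iteratedFDeriv (m := k) le_rfl).continuousOn
  obtain ⟨N, hN⟩ := ((finite_Iic d).image C).bddAbove
  refine ⟨max N 0, le_max_right _ _, fun k x hx => ?_⟩
  rcases le_or_gt k d with hk | hk
  · exact (hC k x hx).trans ((hN (mem_image_of_mem C hk)).trans (le_max_left _ _))
  · simp [hd k hk]

end MvPolynomial

theorem inv_two_add_mul_factorial_mem_Ioo {m : ℝ} (hm : 0 ≤ m) (ℓ : ℕ) :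
    ((2 + m) * ℓ !)⁻¹ ∈ Ioo (0 : ℝ) 1 := by
  have : (1 : ℝ) ≤ ℓ ! := mod_cast ℓ.factorial_pos
  exact ⟨by positivity, inv_lt_one_of_one_lt₀ (by nlinarith)⟩

theorem summable_inv_two_add_mul_factorial_mul_iSup {ι : Type*} {M : ℕ → ℝ}
    (hM : ∀ ℓ, 0 ≤ M ℓ) {u : ℕ → ι → ℝ} {K ρ : ℝ} (hK : 0 ≤ K) (hρ : 0 ≤ ρ)
    (hu0 : ∀ ℓ i, 0 ≤ u ℓ i) (hu : ∀ ℓ i, u ℓ i ≤ K * (ρ ^ ℓ * M ℓ)) :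
    Summable fun ℓ => ((2 + M ℓ) * ℓ !)⁻¹ * ⨆ i, u ℓ i := by
  refine ((Real.summable_pow_div_factorial ρ).mul_left K).of_nonneg_of_le
    (fun ℓ => mul_nonneg (by have := hM ℓ; positivity) (Real.iSup_nonneg (hu0 ℓ))) fun ℓ => ?_
  have hMℓ := hM ℓ
  calc ((2 + M ℓ) * ℓ !)⁻¹ * ⨆ i, u ℓ i
      ≤ ((2 + M ℓ) * ℓ !)⁻¹ * (K * (ρ ^ ℓ * M ℓ)) := by
        gcongr
        exact Real.iSup_le (hu ℓ) (by positivity)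
    _ = K * (ρ ^ ℓ / ℓ !) * (M ℓ / (2 + M ℓ)) := by field_simp
    _ ≤ K * (ρ ^ ℓ / ℓ !) :=
        mul_le_of_le_one_right (by positivity) ((div_le_one (by positivity)).2 (by linarith))

/-- **Floer's `C^∞_ε` norms of rescaled cutoffs of polynomials.**
Given a smooth function `χ : ℝⁿ → ℝ` supported in the closed unit ball, there is a
sequence `ε : ℕ → (0,1)` such that for every `r ∈ (0,1]` and every polynomial `p`, the
series `∑ ℓ, ε ℓ * ‖D^ℓ (χ(·/r) · p)‖_{C⁰}` converges. -/
theorem stmt_12 (n : ℕ) (χ : (Fin n → ℝ) → ℝ) (hχ : ContDiff ℝ (⊤ : ℕ∞) χ)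
    (hsupp : tsupport χ ⊆ Metric.closedBall 0 1) :
    ∃ ε : ℕ → ℝ, (∀ ℓ : ℕ, ε ℓ ∈ Set.Ioo (0 : ℝ) 1) ∧
      ∀ r : ℝ, 0 < r → r ≤ 1 → ∀ p : MvPolynomial (Fin n) ℝ,
        Summable (fun ℓ : ℕ => ε ℓ *
          ⨆ x : Fin n → ℝ,
            ‖iteratedFDeriv ℝ ℓ (fun y => χ (r⁻¹ • y) * MvPolynomial.eval y p) x‖) := by
  have hcs : HasCompactSupport χ :=
    .of_support_subset_isCompact (isCompact_closedBall 0 1) ((subset_tsupport χ).trans hsupp)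
  have hχ' : ∀ k : ℕ, ContDiff ℝ k χ := fun k => hχ.of_le (mod_cast le_top)
  choose C hC using fun k : ℕ =>
    (hcs.iteratedFDeriv k).exists_bound_of_continuous ((hχ' k).continuous_iteratedFDeriv le_rfl)
  set M : ℕ → ℝ := fun ℓ => ∑ i ∈ range (ℓ + 1), ℓ.choose i * C i
  have hM : ∀ ℓ, 0 ≤ M ℓ := fun ℓ =>
    sum_nonneg fun i _ => mul_nonneg (Nat.cast_nonneg _) ((norm_nonneg _).trans (hC i 0))
  refine ⟨fun ℓ => ((2 + M ℓ) * ℓ !)⁻¹, fun ℓ => inv_two_add_mul_factorial_mem_Ioo (hM ℓ) ℓ,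
    fun r hr hr1 p => ?_⟩
  obtain ⟨N, hN0, hN⟩ :=
    p.exists_bound_iteratedFDeriv_eval (hcs.comp_smul (inv_ne_zero hr.ne')).isCompact
  have hρ : 1 ≤ r⁻¹ := (one_le_inv₀ hr).2 hr1
  have hχr : ∀ ℓ, ∀ i ≤ ℓ, ∀ x, ‖iteratedFDeriv ℝ i (fun y => χ (r⁻¹ • y)) x‖ ≤ r⁻¹ ^ ℓ * C i :=
    fun ℓ i hi x => (norm_iteratedFDeriv_comp_smul_le (hχ' i) r⁻¹ x).trans <| by
      rw [Real.norm_of_nonneg (by positivity)]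
      exact mul_le_mul (pow_le_pow_right₀ hρ hi) (hC i _) (norm_nonneg _) (by positivity)
  refine summable_inv_two_add_mul_factorial_mul_iSup hM hN0 (ρ := r⁻¹) (by positivity)
    (fun ℓ x => norm_nonneg _) fun ℓ x => ?_
  calc _ ≤ N * ∑ i ∈ range (ℓ + 1), ℓ.choose i * (r⁻¹ ^ ℓ * C i) :=
        norm_iteratedFDeriv_mul_le_of_tsupport ((hχ' ℓ).comp (contDiff_id.const_smul r⁻¹))
          p.contDiff_eval (hχr ℓ) (fun j _ x hx => hN j x hx) hN0 x
    _ = N * (r⁻¹ ^ ℓ * M ℓ) := by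
        simp only [M, mul_sum]
        exact sum_congr rfl fun i _ => by ring
end

section
/- Let d ∈ ℕ. Consider the complex polynomial ring ℂ[z] as a real vector space and the real tensor product ℂ[z] ⊗_ℝ ℂ[z]. Let ϖ₁ : ℂ[z] ⊗_ℝ ℂ[z] → ℂ[z] be the real-linear map induced by multiplication, ϖ₁(p ⊗ q) = p·q, and let ϖ₂ : ℂ[z] ⊗_ℝ ℂ[z] → ℂ[z,w] be the real-linear map induced by ϖ₂(p ⊗ q) = p(z)·q̄(w), where q̄ is the polynomial obtained from q by conjugating all coefficients and ℂ[z,w] is the polynomial ring in two variables. Then for all b, b', b'', b''' : {0,…,d} → ℝ, the element B := Σ_{j=0}^d [ b_j (z^j ⊗ z^{d−j}) + b'_j (i z^j ⊗ z^{d−j}) + b''_j (z^j ⊗ i z^{d−j}) + b'''_j (i z^j ⊗ i z^{d−j}) ] satisfies ϖ₁(B) = 0 and ϖ₂(B) = 0 if and only if b'''_j = −b_j and b''_j = b'_j for every j, Σ_{j=0}^d b_j = 0, and Σ_{j=0}^d b'_j = 0. -/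
open scoped TensorProduct

noncomputable def conjPoly : Polynomial ℂ →ₗ[ℝ] Polynomial ℂ where
  toFun q := q.map (starRingEnd ℂ)
  map_add' q r := by simp
  map_smul' c q := by
    ext n
    simp [Polynomial.coeff_map, Polynomial.coeff_smul, Complex.real_smul, map_mul,
      Complex.conj_ofReal]

noncomputable def petri1 : (Polynomial ℂ ⊗[ℝ] Polynomial ℂ) →ₗ[ℝ] Polynomial ℂ :=
  TensorProduct.lift (LinearMap.mul ℝ (Polynomial ℂ))

noncomputable def petri2 :
    (Polynomial ℂ ⊗[ℝ] Polynomial ℂ) →ₗ[ℝ] MvPolynomial (Fin 2) ℂ :=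
  (TensorProduct.lift (LinearMap.mul ℝ (MvPolynomial (Fin 2) ℂ))).comp
    (TensorProduct.map
      (LinearMap.restrictScalars ℝ
        (Polynomial.aeval (MvPolynomial.X 0 : MvPolynomial (Fin 2) ℂ)).toLinearMap)
      ((LinearMap.restrictScalars ℝ
        (Polynomial.aeval (MvPolynomial.X 1 : MvPolynomial (Fin 2) ℂ)).toLinearMap).comp
        conjPoly))

lemma petri1_tmul (j k : ℕ) (a a' : ℂ) :
    petri1 ((a • (Polynomial.X:Polynomial ℂ)^j) ⊗ₜ[ℝ] (a' • (Polynomial.X:Polynomial ℂ)^k))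
      = (a * a') • Polynomial.X ^ (j+k) := by
  simp only [petri1, TensorProduct.lift.tmul, LinearMap.mul_apply', smul_mul_assoc,
    mul_smul_comm, mul_smul, ← pow_add]
  exact smul_comm _ _ _

lemma petri2_tmul (j k : ℕ) (a a' : ℂ) :
    petri2 ((a • (Polynomial.X:Polynomial ℂ)^j) ⊗ₜ[ℝ] (a' • (Polynomial.X:Polynomial ℂ)^k))
      = (a * (starRingEnd ℂ a')) • (MvPolynomial.X 0 ^ j * MvPolynomial.X 1 ^ k) := by
  simp only [petri2, conjPoly, LinearMap.comp_apply, TensorProduct.map_tmul,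
    LinearMap.coe_mk, AddHom.coe_mk, LinearMap.restrictScalars_apply,
    AlgHom.toLinearMap_apply, TensorProduct.lift.tmul, LinearMap.mul_apply',
    Polynomial.map_smul, map_smul, Polynomial.map_pow, Polynomial.map_X,
    map_pow, Polynomial.aeval_X]
  simp only [smul_mul_assoc, mul_smul_comm, mul_smul]
  exact smul_comm _ _ _

lemma smul_collect (x y z w : ℝ) (u v s t : ℂ) (p : Polynomial ℂ) :
    x • (u • p) + y • (v • p) + z • (s • p) + w • (t • p)
      = (x • u + y • v + z • s + w • t) • p := by
  rw [← smul_assoc, ← smul_assoc, ← smul_assoc, ← smul_assoc,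
    ← add_smul, ← add_smul, ← add_smul]

lemma smul_collect2 (x y z w : ℝ) (u v s t : ℂ) (p : MvPolynomial (Fin 2) ℂ) :
    x • (u • p) + y • (v • p) + z • (s • p) + w • (t • p)
      = (x • u + y • v + z • s + w • t) • p := by
  rw [← smul_assoc, ← smul_assoc, ← smul_assoc, ← smul_assoc,
    ← add_smul, ← add_smul, ← add_smul]

/-- **Kernel of the polynomial Petri map of the Cauchy–Riemann symbol in degree `d`.**
An element `B = ∑_j b_j (z^j ⊗ z^{d−j}) + b'_j (iz^j ⊗ z^{d−j}) + b''_j (z^j ⊗ iz^{d−j})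
+ b'''_j (iz^j ⊗ iz^{d−j})` satisfies `ϖ₁ B = 0` and `ϖ₂ B = 0` if and only if
`b''' = −b`, `b'' = b'`, `∑ b = 0` and `∑ b' = 0`. -/
theorem stmt_13 (d : ℕ) (b b' b'' b''' : Fin (d + 1) → ℝ)
    (B : Polynomial ℂ ⊗[ℝ] Polynomial ℂ)
    (hB : B = ∑ j : Fin (d + 1),
      (b j • (((Polynomial.X : Polynomial ℂ) ^ (j : ℕ)) ⊗ₜ[ℝ]
          ((Polynomial.X : Polynomial ℂ) ^ (d - (j : ℕ)))) +
       b' j • ((Complex.I • ((Polynomial.X : Polynomial ℂ) ^ (j : ℕ))) ⊗ₜ[ℝ]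
          ((Polynomial.X : Polynomial ℂ) ^ (d - (j : ℕ)))) +
       b'' j • (((Polynomial.X : Polynomial ℂ) ^ (j : ℕ)) ⊗ₜ[ℝ]
          (Complex.I • ((Polynomial.X : Polynomial ℂ) ^ (d - (j : ℕ))))) +
       b''' j • ((Complex.I • ((Polynomial.X : Polynomial ℂ) ^ (j : ℕ))) ⊗ₜ[ℝ]
          (Complex.I • ((Polynomial.X : Polynomial ℂ) ^ (d - (j : ℕ))))))) :
    (petri1 B = 0 ∧ petri2 B = 0) ↔
      ((∀ j, b''' j = - b j) ∧ (∀ j, b'' j = b' j) ∧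
        (∑ j, b j = 0) ∧ (∑ j, b' j = 0)) := by
  classical
  set c1 : Fin (d+1) → ℂ := fun j => ((b j - b''' j : ℝ) : ℂ) + ((b' j + b'' j : ℝ) : ℂ) * Complex.I with hc1def
  set c2 : Fin (d+1) → ℂ := fun j => ((b j + b''' j : ℝ) : ℂ) + ((b' j - b'' j : ℝ) : ℂ) * Complex.I with hc2def
  have hone : ∀ j : ℕ, ((Polynomial.X : Polynomial ℂ) ^ j) = (1:ℂ) • (Polynomial.X:Polynomial ℂ)^j := by
    simp
  have h1 : petri1 B = (∑ j, c1 j) • (Polynomial.X : Polynomial ℂ) ^ d := by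
    rw [hB, map_sum, Finset.sum_smul]
    refine Finset.sum_congr rfl fun j _ => ?_
    have hjd : (j : ℕ) + (d - (j : ℕ)) = d := by omega
    rw [map_add, map_add, map_add, map_smul, map_smul, map_smul, map_smul,
      show ((Polynomial.X:Polynomial ℂ)^(j:ℕ)) ⊗ₜ[ℝ] ((Polynomial.X:Polynomial ℂ)^(d-(j:ℕ)))
        = ((1:ℂ) • (Polynomial.X:Polynomial ℂ)^(j:ℕ)) ⊗ₜ[ℝ] ((1:ℂ) • (Polynomial.X:Polynomial ℂ)^(d-(j:ℕ))) by simp,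
      show ((Complex.I • (Polynomial.X:Polynomial ℂ)^(j:ℕ))) ⊗ₜ[ℝ] ((Polynomial.X:Polynomial ℂ)^(d-(j:ℕ)))
        = (Complex.I • (Polynomial.X:Polynomial ℂ)^(j:ℕ)) ⊗ₜ[ℝ] ((1:ℂ) • (Polynomial.X:Polynomial ℂ)^(d-(j:ℕ))) by simp,
      show ((Polynomial.X:Polynomial ℂ)^(j:ℕ)) ⊗ₜ[ℝ] (Complex.I • (Polynomial.X:Polynomial ℂ)^(d-(j:ℕ)))
        = ((1:ℂ) • (Polynomial.X:Polynomial ℂ)^(j:ℕ)) ⊗ₜ[ℝ] (Complex.I • (Polynomial.X:Polynomial ℂ)^(d-(j:ℕ))) by simp,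
      petri1_tmul, petri1_tmul, petri1_tmul, petri1_tmul, hjd, smul_collect]
    congr 1
    simp only [hc1def, one_mul, mul_one, Complex.I_mul_I, Complex.real_smul]
    push_cast
    ring
  have h2 : petri2 B = ∑ j, c2 j • (MvPolynomial.X 0 ^ (j:ℕ) * MvPolynomial.X 1 ^ (d - (j:ℕ)) : MvPolynomial (Fin 2) ℂ) := by
    rw [hB, map_sum]
    refine Finset.sum_congr rfl fun j _ => ?_
    rw [map_add, map_add, map_add, map_smul, map_smul, map_smul, map_smul,
      show ((Polynomial.X:Polynomial ℂ)^(j:ℕ)) ⊗ₜ[ℝ] ((Polynomial.X:Polynomial ℂ)^(d-(j:ℕ)))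
        = ((1:ℂ) • (Polynomial.X:Polynomial ℂ)^(j:ℕ)) ⊗ₜ[ℝ] ((1:ℂ) • (Polynomial.X:Polynomial ℂ)^(d-(j:ℕ))) by simp,
      show ((Complex.I • (Polynomial.X:Polynomial ℂ)^(j:ℕ))) ⊗ₜ[ℝ] ((Polynomial.X:Polynomial ℂ)^(d-(j:ℕ)))
        = (Complex.I • (Polynomial.X:Polynomial ℂ)^(j:ℕ)) ⊗ₜ[ℝ] ((1:ℂ) • (Polynomial.X:Polynomial ℂ)^(d-(j:ℕ))) by simp,
      show ((Polynomial.X:Polynomial ℂ)^(j:ℕ)) ⊗ₜ[ℝ] (Complex.I • (Polynomial.X:Polynomial ℂ)^(d-(j:ℕ)))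
        = ((1:ℂ) • (Polynomial.X:Polynomial ℂ)^(j:ℕ)) ⊗ₜ[ℝ] (Complex.I • (Polynomial.X:Polynomial ℂ)^(d-(j:ℕ))) by simp,
      petri2_tmul, petri2_tmul, petri2_tmul, petri2_tmul, smul_collect2]
    congr 1
    simp only [hc2def, map_one, Complex.conj_I, mul_one, one_mul, mul_neg,
      Complex.I_mul_I, neg_neg, Complex.real_smul]
    push_cast
    ring
  have hXd : (Polynomial.X : Polynomial ℂ) ^ d ≠ 0 := pow_ne_zero _ Polynomial.X_ne_zero
  have hmono : ∀ j : Fin (d+1),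
      (MvPolynomial.X 0 ^ (j:ℕ) * MvPolynomial.X 1 ^ (d - (j:ℕ)) : MvPolynomial (Fin 2) ℂ)
        = MvPolynomial.monomial (Finsupp.single 0 (j:ℕ) + Finsupp.single 1 (d - (j:ℕ))) 1 := by
    intro j
    rw [MvPolynomial.X_pow_eq_monomial, MvPolynomial.X_pow_eq_monomial,
      MvPolynomial.monomial_mul, one_mul]
  have hminj : ∀ j j' : Fin (d+1),
      (Finsupp.single (0:Fin 2) (j:ℕ) + Finsupp.single 1 (d - (j:ℕ)))
        = (Finsupp.single (0:Fin 2) (j':ℕ) + Finsupp.single 1 (d - (j':ℕ))) → j = j' := by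
    intro j j' h
    have := congrArg (fun f => f 0) h
    simp at this
    exact Fin.ext this
  have h2zero : petri2 B = 0 ↔ ∀ j, c2 j = 0 := by
    rw [h2]
    constructor
    · intro h j
      have hc := congrArg (MvPolynomial.coeff
        (Finsupp.single 0 (j:ℕ) + Finsupp.single 1 (d - (j:ℕ)))) h
      simp only [MvPolynomial.coeff_sum, hmono, MvPolynomial.coeff_smul,
        MvPolynomial.coeff_monomial, MvPolynomial.coeff_zero, smul_eq_mul] at hc
      rw [Finset.sum_eq_single j] at hc
      · simpa using hc
      · intro j' _ hj'
        rw [if_neg (fun h => hj' (hminj j' j h)), mul_zero]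
      · simp
    · intro h
      simp [funext h]
  constructor
  · rintro ⟨hp1, hp2⟩
    have hc2 := h2zero.mp hp2
    have hb3 : ∀ j, b''' j = - b j := by
      intro j
      have := congrArg Complex.re (hc2 j)
      simp [hc2def] at this
      linarith
    have hb2 : ∀ j, b'' j = b' j := by
      intro j
      have := congrArg Complex.im (hc2 j)
      simp [hc2def] at this
      linarith
    have hs : (∑ j, c1 j) = 0 := by
      rw [h1] at hp1
      rcases smul_eq_zero.mp hp1 with h | h
      · exact h
      · exact absurd h hXd
    have hre := congrArg Complex.re hs
    have him := congrArg Complex.im hs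
    rw [Complex.re_sum] at hre
    rw [Complex.im_sum] at him
    simp only [hc1def, Complex.add_re, Complex.ofReal_re, Complex.mul_re,
      Complex.I_re, Complex.I_im, Complex.ofReal_im, Complex.add_im, Complex.mul_im,
      mul_zero, mul_one, zero_mul, sub_zero, add_zero, zero_add, zero_sub,
      Complex.zero_re, Complex.zero_im, neg_zero] at hre him
    refine ⟨hb3, hb2, ?_, ?_⟩
    · have : ∑ j, (b j - b''' j) = 0 := hre
      have h2b : ∑ j, (b j - b''' j) = 2 * ∑ j, b j := by
        rw [Finset.mul_sum]
        exact Finset.sum_congr rfl fun j _ => by rw [hb3 j]; ring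
      rw [h2b] at this
      linarith
    · have : ∑ j, (b' j + b'' j) = 0 := him
      have h2b : ∑ j, (b' j + b'' j) = 2 * ∑ j, b' j := by
        rw [Finset.mul_sum]
        exact Finset.sum_congr rfl fun j _ => by rw [hb2 j]; ring
      rw [h2b] at this
      linarith
  · rintro ⟨h3, h4, h5, h6⟩
    constructor
    · rw [h1]
      have : (∑ j, c1 j) = 0 := by
        simp only [hc1def]
        rw [Finset.sum_add_distrib, ← Finset.sum_mul,
          ← Complex.ofReal_sum, ← Complex.ofReal_sum]
        have e1 : ∑ j, ((b j : ℝ) - b''' j) = 2 * ∑ j, b j := by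
          rw [Finset.mul_sum]; exact Finset.sum_congr rfl fun j _ => by rw [h3 j]; ring
        have e2 : ∑ j, ((b' j : ℝ) + b'' j) = 2 * ∑ j, b' j := by
          rw [Finset.mul_sum]; exact Finset.sum_congr rfl fun j _ => by rw [h4 j]; ring
        rw [e1, e2, h5, h6]
        simp
      rw [this, zero_smul]
    · rw [h2zero]
      intro j
      simp [hc2def, h3 j, h4 j]
end

section
/- Let d ∈ ℕ and let c : {0,…,d} → ℂ be not identically zero. Then the set {m ∈ ℕ : Σ_{j=0}^d c_j/(m + j + 1) = 0} has at most d elements. -/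
open Polynomial Finset


/-- If `c : {0,…,d} → ℂ` is not identically zero, then the set of natural numbers `m` with
`∑_{j=0}^d c j / (m + j + 1) = 0` has at most `d` elements. -/
theorem stmt_14 (d : ℕ) (c : Fin (d + 1) → ℂ) (hc : c ≠ 0) :
    {m : ℕ | ∑ j : Fin (d + 1), c j / ((m : ℂ) + ((j : ℕ) : ℂ) + 1) = 0}.Finite ∧
    {m : ℕ | ∑ j : Fin (d + 1), c j / ((m : ℂ) + ((j : ℕ) : ℂ) + 1) = 0}.ncard ≤ d := by
  set P : Polynomial ℂ :=
    ∑ j : Fin (d + 1), C (c j) * ∏ k ∈ Finset.univ.erase j, (X + C (((k : ℕ) : ℂ) + 1)) with hP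
  obtain ⟨j₀, hj₀⟩ : ∃ j, c j ≠ 0 := by
    by_contra h; push_neg at h; exact hc (funext h)
  have hPne : P ≠ 0 := by
    intro h0
    have := congrArg (Polynomial.eval (-(((j₀ : ℕ) : ℂ) + 1))) h0
    simp only [hP, eval_finset_sum, eval_mul, eval_C, eval_prod, eval_add, eval_X, eval_zero] at this
    rw [Finset.sum_eq_single j₀] at this
    · have hne : ∀ k ∈ Finset.univ.erase j₀, -(((j₀ : ℕ) : ℂ) + 1) + (((k : ℕ) : ℂ) + 1) ≠ 0 := by
        intro k hk
        have hk' : k ≠ j₀ := Finset.mem_erase.mp hk |>.1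
        intro h
        have : ((k : ℕ) : ℂ) = ((j₀ : ℕ) : ℂ) := by linear_combination h
        exact hk' (Fin.ext (Nat.cast_injective this))
      exact hj₀ (by
        rcases mul_eq_zero.mp this with h | h
        · exact h
        · exact absurd h (Finset.prod_ne_zero_iff.mpr hne))
    · intro j _ hj
      apply mul_eq_zero_of_right
      apply Finset.prod_eq_zero (Finset.mem_erase.mpr ⟨Ne.symm hj, Finset.mem_univ j₀⟩)
      ring
    · intro h; exact absurd (Finset.mem_univ j₀) h
  have hdeg : P.natDegree ≤ d := by
    apply Polynomial.natDegree_sum_le_of_forall_le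
    intro j _
    calc (C (c j) * ∏ k ∈ Finset.univ.erase j, (X + C (((k : ℕ) : ℂ) + 1))).natDegree
        ≤ (C (c j)).natDegree + (∏ k ∈ Finset.univ.erase j, (X + C (((k : ℕ) : ℂ) + 1))).natDegree :=
          natDegree_mul_le
      _ ≤ 0 + ∑ k ∈ Finset.univ.erase j, (X + C (((k : ℕ) : ℂ) + 1)).natDegree := by
          gcongr
          · exact le_of_eq (natDegree_C _)
          · exact natDegree_prod_le _ _
      _ = ∑ k ∈ Finset.univ.erase j, 1 := by
          rw [zero_add]
          exact Finset.sum_congr rfl fun k _ => natDegree_X_add_C _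
      _ ≤ d := by
          rw [Finset.sum_const, smul_eq_mul, mul_one,
            Finset.card_erase_of_mem (Finset.mem_univ j)]
          simp
  -- zeros of the sum are roots of P
  have hroot : ∀ m : ℕ, (∑ j : Fin (d + 1), c j / ((m : ℂ) + ((j : ℕ) : ℂ) + 1) = 0) →
      P.eval (m : ℂ) = 0 := by
    intro m hm
    have hnz : ∀ j : Fin (d + 1), (m : ℂ) + ((j : ℕ) : ℂ) + 1 ≠ 0 := by
      intro j h
      have h2 : ((m + j + 1 : ℕ) : ℂ) = 0 := by push_cast; linear_combination h
      have h3 : m + (j : ℕ) + 1 = 0 := by exact_mod_cast h2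
      omega
    have key : P.eval (m : ℂ)
        = (∏ k : Fin (d + 1), ((m : ℂ) + (((k : ℕ) : ℂ) + 1))) *
          ∑ j : Fin (d + 1), c j / ((m : ℂ) + ((j : ℕ) : ℂ) + 1) := by
      rw [Finset.mul_sum]
      simp only [hP, eval_finset_sum, eval_mul, eval_C, eval_prod, eval_add, eval_X]
      apply Finset.sum_congr rfl
      intro j _
      rw [← Finset.mul_prod_erase Finset.univ _ (Finset.mem_univ j)]
      rw [eq_comm, mul_comm, ← mul_assoc, ← add_assoc]
      congr 1
      field_simp
      exact mul_div_cancel_right₀ (c j) (hnz j)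
    rw [key, hm, mul_zero]
  set S := {m : ℕ | ∑ j : Fin (d + 1), c j / ((m : ℂ) + ((j : ℕ) : ℂ) + 1) = 0} with hS
  have hsub : ((↑) : ℕ → ℂ) '' S ⊆ ↑P.roots.toFinset := by
    rintro x ⟨m, hm, rfl⟩
    simp only [Multiset.mem_toFinset, Finset.coe_sort_coe, Finset.mem_coe,
      mem_roots hPne]
    exact hroot m hm
  have hfin : S.Finite := by
    have := Set.Finite.preimage (Nat.cast_injective.injOn) (P.roots.toFinset.finite_toSet)
    exact this.subset (fun m hm => hsub (Set.mem_image_of_mem _ hm))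
  refine ⟨hfin, ?_⟩
  calc S.ncard = (((↑) : ℕ → ℂ) '' S).ncard :=
        (Set.ncard_image_of_injective _ Nat.cast_injective).symm
    _ ≤ (↑P.roots.toFinset : Set ℂ).ncard :=
        Set.ncard_le_ncard hsub (P.roots.toFinset.finite_toSet)
    _ = P.roots.toFinset.card := by simp [Set.ncard_coe_finset]
    _ ≤ Multiset.card P.roots := Multiset.toFinset_card_le _
    _ ≤ P.natDegree := P.card_roots'
    _ ≤ d := hdeg
end

section
/- Let k ≥ 1 be a natural number. For every finite subset S ⊆ ℕ × ℕ there exists a subset S* ⊆ S such that #S ≤ 2·#S* and such that there are no two elements (α,β) ∈ S* and (α',β') ∈ S* with α' = α − k and β' = β + k (equivalently, (α,β) ∈ S* implies (α−k, β+k) ∉ S*). -/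
/-- For every finite subset `S ⊆ ℕ × ℕ` there is a subset `S* ⊆ S` with `#S ≤ 2 * #S*`
containing no two elements `(α,β)` and `(α',β')` with `α' = α − k` and `β' = β + k`. -/
theorem stmt_15 (k : ℕ) (hk : 1 ≤ k) (S : Finset (ℕ × ℕ)) :
    ∃ S' ⊆ S, S.card ≤ 2 * S'.card ∧
      ∀ a ∈ S', ∀ b ∈ S', ¬(a.1 = b.1 + k ∧ b.2 = a.2 + k) := by
  have hkpos : 0 < k := hk
  set P : ℕ × ℕ → Prop := fun p => p.1 / k % 2 = 0 with hP
  have hdec : DecidablePred P := fun p => by unfold P; infer_instance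
  classical
  have hsplit : (S.filter P).card + (S.filter (fun p => ¬ P p)).card = S.card :=
    Finset.card_filter_add_card_filter_not _
  -- key: same parity class contains no bad pair
  have key : ∀ (T : Finset (ℕ × ℕ)), (∀ p ∈ T, ∀ q ∈ T, p.1 / k % 2 = q.1 / k % 2) →
      ∀ a ∈ T, ∀ b ∈ T, ¬(a.1 = b.1 + k ∧ b.2 = a.2 + k) := by
    intro T hT a ha b hb ⟨h1, _⟩
    have := hT a ha b hb
    rw [h1, Nat.add_div_right _ hkpos] at this
    omega
  by_cases hc : (S.filter (fun p => ¬ P p)).card ≤ (S.filter P).card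
  · refine ⟨S.filter P, Finset.filter_subset _ _, by omega, key _ ?_⟩
    intro p hp q hq
    have hp' := (Finset.mem_filter.mp hp).2
    have hq' := (Finset.mem_filter.mp hq).2
    simp only [hP] at hp' hq'
    omega
  · refine ⟨S.filter (fun p => ¬ P p), Finset.filter_subset _ _, by omega, key _ ?_⟩
    intro p hp q hq
    have hp' := (Finset.mem_filter.mp hp).2
    have hq' := (Finset.mem_filter.mp hq).2
    simp only [hP] at hp' hq'
    omega
end

section
/- Let d ∈ ℕ and let b, b' : {0,…,d} → ℝ be not both identically zero, with Σ_{j=0}^d b_j = 0 and Σ_{j=0}^d b'_j = 0. Define p : ℕ → ℂ by p(β) := Σ_{j=0}^d 2(b_j − i b'_j)/(β + j + 1) and q : ℕ → ℂ by q(α) := −Σ_{j=0}^d 2(b_j + i b'_j)/(α + d − j + 1). Let Q be the ℂ-linear endomorphism of the polynomial ring ℂ[z,w] determined on monomials by Q(z^α w^β) := p(β)·z^α w^{β+d+1} + q(α)·z^{α+d+1} w^β. Then for every natural number ℓ ≥ 8d, the restriction of Q to the subspace spanned by the monomials z^α w^β with α + β ≤ ℓ has rank (over ℂ) at least ℓ²/16.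 -/
/-!
The coefficient `p β = ∑ j, c j / (β + j + 1)`, with `c = 2 (b - i b') ≠ 0`, is a sum of simple
fractions with distinct poles; by the barycentric form of Lagrange interpolation it is, up to a
nonvanishing factor, the value at `β` of a nonzero polynomial of degree `≤ d`, so `p` has at most
`d` zeros in `ℕ`. `Q` is triangular: the coefficient of `z^α w^(β+d+1)` in `Q (z^α' w^β')` is
`p β` when `(α', β') = (α, β)` and vanishes unless `α' < α`. Hence `Q` is injective on the span of
the monomials `z^α w^β` with `α, β ≤ ℓ / 2` and `p β ≠ 0`, which number at least
`(ℓ / 2 + 1) (ℓ / 2 + 1 - d) ≥ ℓ² / 16` once `8 d ≤ ℓ`.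
-/

open Finset

theorem linearIndependent_of_triangular {K V ι : Type*} [Ring K] [NoZeroDivisors K]
    [AddCommGroup V] [Module K V] {f : ι → V} (φ : ι → V →ₗ[K] K)
    {r : ι → ι → Prop} (hr : WellFounded r) (hdiag : ∀ i, φ i (f i) ≠ 0)
    (htri : ∀ i j, j ≠ i → φ i (f j) ≠ 0 → r j i) :
    LinearIndependent K f := by
  rw [linearIndependent_iff']
  intro s g hg i
  induction i using hr.induction with
  | _ i ih =>
  intro hi
  have hφ : ∑ j ∈ s, g j * φ i (f j) = 0 := by
    simpa only [map_sum, map_smul, smul_eq_mul, map_zero] using congrArg (φ i) hg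
  rw [Finset.sum_eq_single_of_mem i hi] at hφ
  · exact (mul_eq_zero.mp hφ).resolve_right (hdiag i)
  · intro j hj hji
    by_cases h : φ i (f j) = 0
    · rw [h, mul_zero]
    · rw [ih j (htri i j hji h) hj, zero_mul]

open Polynomial in
theorem card_lt_of_sum_div_sub_eq_zero {F ι : Type*} [Field F] [Fintype ι]
    {v : ι → F} (hv : Function.Injective v) {c : ι → F} (hc : c ≠ 0) {t : Finset F}
    (ht : ∀ x ∈ t, (∀ i, x ≠ v i) ∧ ∑ i, c i / (x - v i) = 0) :
    #t < Fintype.card ι := by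
  classical
  have hvs : Set.InjOn v (univ : Finset ι) := hv.injOn
  have hw : ∀ i, Lagrange.nodalWeight univ v i ≠ 0 := fun i =>
    Lagrange.nodalWeight_ne_zero hvs (mem_univ i)
  set r : ι → F := fun i => c i / Lagrange.nodalWeight univ v i
  set P := Lagrange.interpolate univ v r
  have hP : ∀ x ∈ t, P.eval x = 0 := by
    intro x hx
    have hsum :
        ∑ i, Lagrange.nodalWeight univ v i * (x - v i)⁻¹ * r i = ∑ i, c i / (x - v i) :=
      sum_congr rfl fun i _ => by rw [mul_right_comm, mul_div_cancel₀ _ (hw i), div_eq_mul_inv]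
    rw [Lagrange.eval_interpolate_not_at_node r fun i _ => (ht x hx).1 i, hsum, (ht x hx).2,
      mul_zero]
  by_contra! hcard
  have hP0 : P = 0 := by
    by_contra hne
    refine hne (eq_zero_of_natDegree_lt_card_of_eval_eq_zero' P t hP ?_)
    rw [natDegree_lt_iff_degree_lt hne]
    exact (Lagrange.degree_interpolate_lt r hvs).trans_le (by simpa using hcard)
  refine hc (funext fun i => ?_)
  have : P.eval (v i) = r i := Lagrange.eval_interpolate_at_node r hvs (mem_univ i)
  rw [hP0, eval_zero, eq_comm, div_eq_zero_iff] at this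
  exact this.resolve_right (hw i)

theorem card_le_of_forall_sum_div_add_eq_zero {F : Type*} [Field F] [CharZero F] {d : ℕ}
    {c : Fin (d + 1) → F} (hc : c ≠ 0) {t : Finset ℕ}
    (ht : ∀ β ∈ t, ∑ j : Fin (d + 1), c j / ((β : F) + ((j : ℕ) : F) + 1) = 0) :
    #t ≤ d := by
  classical
  have hpos (β : ℕ) (j : Fin (d + 1)) : (β : F) + ((j : ℕ) : F) + 1 ≠ 0 := by
    exact_mod_cast Nat.succ_ne_zero (β + j)
  have key := card_lt_of_sum_div_sub_eq_zero
    (v := fun j : Fin (d + 1) => -(((j : ℕ) : F) + 1)) (fun i j h => Fin.ext (by simpa using h))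
    hc (t := t.image (Nat.cast : ℕ → F)) ?_
  · rw [card_image_of_injective _ Nat.cast_injective, Fintype.card_fin] at key
    omega
  simp only [mem_image, sub_neg_eq_add, ← add_assoc]
  rintro _ ⟨β, hβ, rfl⟩
  exact ⟨fun j h => hpos β j (by rw [h]; ring), ht β hβ⟩

theorem two_mul_ofReal_sub_I_mul_ofReal_ne_zero {ι : Type*} {x y : ι → ℝ}
    (h : ¬(x = 0 ∧ y = 0)) : (fun j => 2 * ((x j : ℂ) - Complex.I * (y j : ℂ))) ≠ 0 := by
  contrapose! h
  simpa [funext_iff, Complex.ext_iff, forall_and] using h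

open Module Submodule in
theorem card_le_finrank_map_span {K V W ι : Type*} [Field K] [AddCommGroup V] [Module K V]
    [AddCommGroup W] [Module K W] (f : V →ₗ[K] W) (v : ι → V) {T : Set ι} (hT : T.Finite)
    {S : Finset ι} (hST : ↑S ⊆ T) (hli : LinearIndependent K fun s : S => f (v s)) :
    #S ≤ finrank K (map f (span K (v '' T))) := by
  have := FiniteDimensional.span_of_finite K (hT.image v)
  calc #S = finrank K (span K (Set.range fun s : S => f (v s))) := by
        rw [finrank_span_eq_card hli, Fintype.card_coe]
    _ ≤ finrank K (map f (span K (v '' T))) := by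
        refine finrank_mono (span_le.2 ?_)
        rintro _ ⟨s, rfl⟩
        exact mem_map_of_mem (subset_span ⟨s, hST s.2, rfl⟩)

theorem single_zero_add_single_one_inj {a b a' b' : ℕ} :
    (Finsupp.single (0 : Fin 2) a + Finsupp.single 1 b = Finsupp.single 0 a' + Finsupp.single 1 b')
      ↔ a = a' ∧ b = b' := by
  constructor
  · intro h
    exact ⟨by simpa using DFunLike.congr_fun h 0, by simpa using DFunLike.congr_fun h 1⟩
  · rintro ⟨rfl, rfl⟩
    rfl

open MvPolynomial Finsupp in
theorem linearIndependent_image_monomial {R : Type*} [CommRing R] [NoZeroDivisors R] (d : ℕ)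
    (p q : ℕ → R) (Q : MvPolynomial (Fin 2) R →ₗ[R] MvPolynomial (Fin 2) R)
    (hQ : ∀ α β : ℕ, Q (monomial (single 0 α + single 1 β) 1) =
      p β • monomial (single 0 α + single 1 (β + d + 1)) 1 +
        q α • monomial (single 0 (α + d + 1) + single 1 β) 1)
    {S : Set (ℕ × ℕ)} (hS : ∀ s ∈ S, p s.2 ≠ 0) :
    LinearIndependent R fun s : S => Q (monomial (single 0 s.1.1 + single 1 s.1.2) 1) := by
  have hcoeff : ∀ s t : ℕ × ℕ,
      coeff (single 0 s.1 + single 1 (s.2 + d + 1))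
          (Q (monomial (single 0 t.1 + single 1 t.2) 1)) =
        (if t = s then p t.2 else 0) +
          (if t.1 + d + 1 = s.1 ∧ t.2 = s.2 + d + 1 then q t.1 else 0) := by
    intro s t
    simp only [hQ, coeff_add, coeff_smul, coeff_monomial, single_zero_add_single_one_inj,
      Prod.ext_iff, add_left_inj, smul_eq_mul, mul_ite, mul_one, mul_zero]
  refine linearIndependent_of_triangular
    (fun s => lcoeff R (single 0 s.1.1 + single 1 (s.1.2 + d + 1)))
    (InvImage.wf (fun s : S => s.1.1) wellFounded_lt) (fun s => ?_) (fun s t hts => ?_)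
  · rw [lcoeff_apply, hcoeff, if_pos rfl, if_neg (by omega), add_zero]
    exact hS s s.2
  · rw [lcoeff_apply, hcoeff, if_neg (Subtype.coe_ne_coe.2 hts), zero_add]
    intro h
    simp only [InvImage]
    split_ifs at h with h'
    · omega
    · exact absurd rfl h

theorem stmt_16_general (d : ℕ) (b b' : Fin (d + 1) → ℝ) (hne : ¬(b = 0 ∧ b' = 0))
    (p q : ℕ → ℂ)
    (hp : ∀ β : ℕ, p β = ∑ j : Fin (d + 1),
      2 * ((b j : ℂ) - Complex.I * (b' j : ℂ)) / ((β : ℂ) + ((j : ℕ) : ℂ) + 1))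
    (Q : MvPolynomial (Fin 2) ℂ →ₗ[ℂ] MvPolynomial (Fin 2) ℂ)
    (hQ : ∀ α β : ℕ,
      Q (MvPolynomial.monomial (Finsupp.single 0 α + Finsupp.single 1 β) (1 : ℂ)) =
        p β • MvPolynomial.monomial
            (Finsupp.single 0 α + Finsupp.single 1 (β + d + 1)) (1 : ℂ) +
        q α • MvPolynomial.monomial
            (Finsupp.single 0 (α + d + 1) + Finsupp.single 1 β) (1 : ℂ))
    (ℓ : ℕ) (hℓ : 8 * d ≤ ℓ) :
    ℓ ^ 2 ≤ 16 * Module.finrank ℂ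
      ↥(Submodule.map Q (Submodule.span ℂ
        ((fun ab : ℕ × ℕ =>
          (MvPolynomial.monomial (Finsupp.single 0 ab.1 + Finsupp.single 1 ab.2) (1 : ℂ) :
            MvPolynomial (Fin 2) ℂ)) '' {ab : ℕ × ℕ | ab.1 + ab.2 ≤ ℓ}))) := by
  set m := ℓ / 2
  set G := (range (m + 1)).filter fun β => p β ≠ 0
  have hG : m + 1 ≤ #G + d := by
    have hZ := card_le_of_forall_sum_div_add_eq_zero
      (two_mul_ofReal_sub_I_mul_ofReal_ne_zero hne) (t := (range (m + 1)).filter (p · = 0))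
      fun β hβ => by rw [← (mem_filter.1 hβ).2, hp]
    have hsplit : #((range (m + 1)).filter (p · = 0)) + #G = m + 1 :=
      (card_filter_add_card_filter_not (p · = 0)).trans (card_range _)
    omega
  have hT : {ab : ℕ × ℕ | ab.1 + ab.2 ≤ ℓ}.Finite :=
    (Set.finite_Iic (ℓ, ℓ)).subset fun ab (h : ab.1 + ab.2 ≤ ℓ) => ⟨by omega, by omega⟩
  have hS : ↑(range (m + 1) ×ˢ G) ⊆ {ab : ℕ × ℕ | ab.1 + ab.2 ≤ ℓ} := fun s hs => by
    simp only [G, coe_product, Set.mem_prod, mem_coe, mem_filter, mem_range] at hs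
    simp only [Set.mem_ofPred_eq]
    omega
  have hrank := card_le_finrank_map_span Q
    (fun ab : ℕ × ℕ => MvPolynomial.monomial (Finsupp.single 0 ab.1 + Finsupp.single 1 ab.2) 1)
    hT hS <|
    linearIndependent_image_monomial d p q Q hQ fun s hs => (mem_filter.1 (mem_product.1 hs).2).2
  rw [card_product, card_range] at hrank
  have hℓm : ℓ ≤ 2 * m + 1 := by omega
  have hGm : 3 * m + 4 ≤ 4 * #G := by omega
  calc ℓ ^ 2 ≤ (2 * m + 1) ^ 2 := by gcongr
    _ ≤ 4 * (m + 1) * (3 * m + 4) := by nlinarith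
    _ ≤ 16 * ((m + 1) * #G) := by nlinarith
    _ ≤ _ := by gcongr

/-- **Quantitative rank bound for the operator `𝐐_B` (Wendl's condition for
Cauchy–Riemann symbols).** Let `B` be a nonzero homogeneous degree-`d` element of the
kernel of the polynomial Petri map, encoded by coefficients `b, b'` with
`∑ b = ∑ b' = 0`, not both zero. Let `Q` be the `ℂ`-linear endomorphism of `ℂ[z,w]`
with `Q(z^α w^β) = p β • z^α w^{β+d+1} + q α • z^{α+d+1} w^β`. Then for `ℓ ≥ 8d` the
restriction of `Q` to the span of the monomials `z^α w^β` with `α + β ≤ ℓ` has rank at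
least `ℓ²/16`. -/
theorem stmt_16 (d : ℕ) (b b' : Fin (d + 1) → ℝ) (hne : ¬(b = 0 ∧ b' = 0))
    (hb : ∑ j, b j = 0) (hb' : ∑ j, b' j = 0)
    (p q : ℕ → ℂ)
    (hp : ∀ β : ℕ, p β = ∑ j : Fin (d + 1),
      2 * ((b j : ℂ) - Complex.I * (b' j : ℂ)) / ((β : ℂ) + ((j : ℕ) : ℂ) + 1))
    (hq : ∀ α : ℕ, q α = -∑ j : Fin (d + 1),
      2 * ((b j : ℂ) + Complex.I * (b' j : ℂ)) / ((α : ℂ) + (d : ℂ) - ((j : ℕ) : ℂ) + 1))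
    (Q : MvPolynomial (Fin 2) ℂ →ₗ[ℂ] MvPolynomial (Fin 2) ℂ)
    (hQ : ∀ α β : ℕ,
      Q (MvPolynomial.monomial (Finsupp.single 0 α + Finsupp.single 1 β) (1 : ℂ)) =
        p β • MvPolynomial.monomial
            (Finsupp.single 0 α + Finsupp.single 1 (β + d + 1)) (1 : ℂ) +
        q α • MvPolynomial.monomial
            (Finsupp.single 0 (α + d + 1) + Finsupp.single 1 β) (1 : ℂ))
    (ℓ : ℕ) (hℓ : 8 * d ≤ ℓ) :
    ℓ ^ 2 ≤ 16 * Module.finrank ℂ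
      ↥(Submodule.map Q (Submodule.span ℂ
        ((fun ab : ℕ × ℕ =>
          (MvPolynomial.monomial (Finsupp.single 0 ab.1 + Finsupp.single 1 ab.2) (1 : ℂ) :
            MvPolynomial (Fin 2) ℂ)) '' {ab : ℕ × ℕ | ab.1 + ab.2 ≤ ℓ}))) :=
  stmt_16_general d b b' hne p q hp Q hQ ℓ hℓ
end
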